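/- arXiv:2301.01473 — 10 statements merged into one kernel-verified Lean document; each statement's English description precedes it below -/
import Mathlib

section
/- Let H be an n×n Hermitian matrix with zero diagonal, eigenvalues θ_1 < ... < θ_n all distinct (n eigenvalues total), and suppose Tr(H²) = 2m for a natural number m. Let σ = min over r ≠ s of |θ_r − θ_s|. Then σ² · n(n²−1)/24 ≤ m. -/
open Matrix

lemma sum_cast_id' (n : ℕ) : ∑ i ∈ Finset.range n, (i : ℝ) = n * (n - 1) / 2 := by
  induction n with
  | zero => simp
  | succ k ih => rw [Finset.sum_range_succ, ih]; push_cast; ring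

lemma sum_cast_sq' (n : ℕ) :
    ∑ i ∈ Finset.range n, (i : ℝ) ^ 2 = n * (n - 1) * (2 * n - 1) / 6 := by
  induction n with
  | zero => simp
  | succ k ih => rw [Finset.sum_range_succ, ih]; push_cast; ring

lemma double_sum_sq {n : ℕ} (f : Fin n → ℝ) :
    ∑ i : Fin n, ∑ j : Fin n, (f i - f j) ^ 2
      = 2 * n * (∑ i : Fin n, (f i) ^ 2) - 2 * (∑ i : Fin n, f i) ^ 2 := by
  have h : ∀ i j : Fin n, (f i - f j) ^ 2 = (f i) ^ 2 - 2 * (f i * f j) + (f j) ^ 2 := by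
    intro i j; ring
  simp_rw [h, Finset.sum_add_distrib, Finset.sum_sub_distrib, ← Finset.mul_sum,
    Finset.sum_const, Finset.card_univ, Fintype.card_fin, nsmul_eq_mul, ← Finset.sum_mul,
    Finset.mul_sum]
  simp_rw [← mul_assoc, ← Finset.mul_sum]
  ring

/-- For an `n × n` Hermitian matrix `H` with zero diagonal, distinct eigenvalues,
and `Tr(H²) = 2m`, the minimum eigenvalue gap `σ` satisfies
`σ² · n(n²−1)/24 ≤ m`. -/
theorem stmt1 {n : ℕ} (H : Matrix (Fin n) (Fin n) ℂ) (hH : H.IsHermitian)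
    (hdiag : ∀ a, H a a = 0)
    (hdist : Function.Injective hH.eigenvalues)
    (m : ℕ) (htr : (H ^ 2).trace = (2 * m : ℂ))
    (σ : ℝ)
    (hσ : IsLeast {x : ℝ | ∃ r s : Fin n, r ≠ s ∧
      x = |hH.eigenvalues r - hH.eigenvalues s|} σ) :
    σ ^ 2 * (n * (n ^ 2 - 1)) / 24 ≤ (m : ℝ) := by
  set f := hH.eigenvalues with hf
  set U : Matrix (Fin n) (Fin n) ℂ := (hH.eigenvectorUnitary : Matrix (Fin n) (Fin n) ℂ) with hUdef
  have hUU : U * star U = 1 := (Matrix.mem_unitaryGroup_iff).mp hH.eigenvectorUnitary.2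
  have hUU' : star U * U = 1 := (Matrix.mem_unitaryGroup_iff').mp hH.eigenvectorUnitary.2
  set D : Matrix (Fin n) (Fin n) ℂ := Matrix.diagonal (RCLike.ofReal ∘ f) with hDdef
  have hspec : H = U * D * star U := hH.spectral_theorem
  -- trace of H is 0
  have htrH : H.trace = 0 := by
    rw [Matrix.trace]
    simp [Matrix.diag, hdiag]
  -- sum of eigenvalues is 0
  have hsum0 : ∑ i, f i = 0 := by
    have h1 : H.trace = ∑ i, (f i : ℂ) := by
      rw [hspec, Matrix.trace_mul_cycle, hUU', one_mul, hDdef, Matrix.trace_diagonal]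
      simp
    rw [htrH] at h1
    have : ((∑ i, f i : ℝ) : ℂ) = 0 := by push_cast; rw [← h1]
    exact_mod_cast this
  -- sum of squares of eigenvalues is 2m
  have hsum2 : ∑ i, (f i) ^ 2 = 2 * m := by
    have hH2 : H ^ 2 = U * (D * D) * star U := by
      rw [pow_two, hspec]
      calc U * D * star U * (U * D * star U) = U * D * (star U * U) * D * star U := by
            noncomm_ring
        _ = U * (D * D) * star U := by rw [hUU']; noncomm_ring
    have h1 : (H ^ 2).trace = ∑ i, (f i : ℂ) ^ 2 := by
      rw [hH2, Matrix.trace_mul_cycle, hUU', one_mul, hDdef, Matrix.diagonal_mul_diagonal,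
        Matrix.trace_diagonal]
      simp [pow_two]
    rw [htr] at h1
    have : ((∑ i, (f i) ^ 2 : ℝ) : ℂ) = ((2 * m : ℝ) : ℂ) := by push_cast; rw [← h1]
    exact_mod_cast this
  -- sorted eigenvalues
  set e := Tuple.sort f with he
  set g : Fin n → ℝ := f ∘ e with hg
  have hgmono : StrictMono g :=
    (Tuple.monotone_sort f).strictMono_of_injective (hdist.comp e.injective)
  have hσ0 : 0 ≤ σ := by
    obtain ⟨r, s, hrs, hx⟩ := hσ.1
    rw [hx]; exact abs_nonneg _
  have step : ∀ i j : Fin n, i ≠ j → σ ≤ |g i - g j| := by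
    intro i j hij
    exact hσ.2 ⟨e i, e j, fun h => hij (e.injective h), rfl⟩
  have adj : ∀ i j : Fin n, (j : ℕ) = (i : ℕ) + 1 → σ ≤ g j - g i := by
    intro i j h
    have hlt : i < j := by rw [Fin.lt_def]; omega
    have h1 := step i j (ne_of_lt hlt)
    have h2 : g i < g j := hgmono hlt
    rwa [abs_sub_comm, abs_of_pos (sub_pos.mpr h2)] at h1
  have main : ∀ k : ℕ, ∀ i j : Fin n, (j : ℕ) = (i : ℕ) + k → σ * k ≤ g j - g i := by
    intro k
    induction k with
    | zero =>
      intro i j h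
      have : i = j := Fin.ext (by omega)
      simp [this]
    | succ k ih =>
      intro i j h
      have hjlt : (i : ℕ) + k < n := by have := j.isLt; omega
      have h1 := ih i ⟨(i : ℕ) + k, hjlt⟩ rfl
      have h2 := adj ⟨(i : ℕ) + k, hjlt⟩ j (by simp only [Fin.val_mk]; omega)
      push_cast
      linarith
  have sqbound : ∀ i j : Fin n, σ ^ 2 * ((i : ℝ) - (j : ℝ)) ^ 2 ≤ (g i - g j) ^ 2 := by
    intro i j
    rcases le_total i j with hij | hij
    · have hk : (j : ℕ) = (i : ℕ) + ((j : ℕ) - (i : ℕ)) := by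
        have := Fin.le_def.mp hij; omega
      have h1 := main ((j : ℕ) - (i : ℕ)) i j hk
      have hc : (((j : ℕ) - (i : ℕ) : ℕ) : ℝ) = (j : ℝ) - (i : ℝ) := by
        have := Fin.le_def.mp hij; push_cast [Nat.cast_sub this]; ring
      rw [hc] at h1
      have h0 : 0 ≤ σ * ((j : ℝ) - (i : ℝ)) := by
        apply mul_nonneg hσ0
        have := Fin.le_def.mp hij
        have : (i : ℝ) ≤ (j : ℝ) := by exact_mod_cast this
        linarith
      nlinarith
    · have hk : (i : ℕ) = (j : ℕ) + ((i : ℕ) - (j : ℕ)) := by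
        have := Fin.le_def.mp hij; omega
      have h1 := main ((i : ℕ) - (j : ℕ)) j i hk
      have hc : (((i : ℕ) - (j : ℕ) : ℕ) : ℝ) = (i : ℝ) - (j : ℝ) := by
        have := Fin.le_def.mp hij; push_cast [Nat.cast_sub this]; ring
      rw [hc] at h1
      have h0 : 0 ≤ σ * ((i : ℝ) - (j : ℝ)) := by
        apply mul_nonneg hσ0
        have := Fin.le_def.mp hij
        have : (j : ℝ) ≤ (i : ℝ) := by exact_mod_cast this
        linarith
      nlinarith
  -- sum the bound
  have hsumineq : σ ^ 2 * ∑ i : Fin n, ∑ j : Fin n, ((i : ℝ) - (j : ℝ)) ^ 2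
      ≤ ∑ i : Fin n, ∑ j : Fin n, (g i - g j) ^ 2 := by
    rw [Finset.mul_sum]
    apply Finset.sum_le_sum
    intro i _
    rw [Finset.mul_sum]
    exact Finset.sum_le_sum fun j _ => sqbound i j
  -- RHS equals 4nm
  have hRHS : ∑ i : Fin n, ∑ j : Fin n, (g i - g j) ^ 2 = 4 * n * m := by
    have hre : ∑ i : Fin n, ∑ j : Fin n, (g i - g j) ^ 2
        = ∑ i : Fin n, ∑ j : Fin n, (f i - f j) ^ 2 := by
      rw [← Equiv.sum_comp e (fun i => ∑ j : Fin n, (f i - f j) ^ 2)]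
      exact Finset.sum_congr rfl fun i _ =>
        (Equiv.sum_comp e (fun j => (f (e i) - f j) ^ 2)).symm ▸ rfl
    rw [hre, double_sum_sq, hsum0, hsum2]
    ring
  -- LHS sum formula
  have hLHS : ∑ i : Fin n, ∑ j : Fin n, ((i : ℝ) - (j : ℝ)) ^ 2
      = (n : ℝ) ^ 2 * ((n : ℝ) ^ 2 - 1) / 6 := by
    rw [double_sum_sq (fun i : Fin n => (i : ℝ))]
    rw [Fin.sum_univ_eq_sum_range (fun i => (i : ℝ) ^ 2), Fin.sum_univ_eq_sum_range
      (fun i => (i : ℝ)), sum_cast_id', sum_cast_sq']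
    ring
  rw [hRHS, hLHS] at hsumineq
  -- n is positive
  obtain ⟨r, s, hrs, hx⟩ := hσ.1
  have hn : 0 < (n : ℝ) := by exact_mod_cast r.pos
  have key : σ ^ 2 * ((n : ℝ) * ((n : ℝ) ^ 2 - 1)) ≤ 24 * m := by
    have h1 : (n : ℝ) * (σ ^ 2 * ((n : ℝ) * ((n : ℝ) ^ 2 - 1))) ≤ (n : ℝ) * (24 * m) := by
      nlinarith [hsumineq]
    exact le_of_mul_le_mul_left h1 hn
  linarith
end

section
/- If an oriented graph on n vertices admits universal perfect state transfer, then n ≤ 11. Moreover if n ≥ 6 then all eigenvalues of its Hermitian adjacency matrix are integers. -/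
open Matrix

/-- `H` is the Hermitian adjacency matrix of an oriented graph: zero diagonal and
off-diagonal entries in `{0, i, −i}`, with `H` Hermitian. -/
def IsOrientedAdj {n : ℕ} (H : Matrix (Fin n) (Fin n) ℂ) : Prop :=
  H.IsHermitian ∧ (∀ a, H a a = 0) ∧
    ∀ a b, H a b = 0 ∨ H a b = Complex.I ∨ H a b = -Complex.I

/-- Perfect state transfer from `a` to `b` at time `t`:
`exp(−itH) e_a = α e_b` for some unimodular `α`. -/
def PST {n : ℕ} (H : Matrix (Fin n) (Fin n) ℂ) (a b : Fin n) (t : ℝ) : Prop :=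
  ∃ α : ℂ, ‖α‖ = 1 ∧
    (NormedSpace.exp ((-(Complex.I * t)) • H)) *ᵥ (Pi.single a 1 : Fin n → ℂ)
      = α • (Pi.single b 1 : Fin n → ℂ)

namespace UPSTaux
variable {n : ℕ} {H : Matrix (Fin n) (Fin n) ℂ} (hH : H.IsHermitian)

noncomputable def U (hH : H.IsHermitian) : Matrix (Fin n) (Fin n) ℂ :=
  (hH.eigenvectorUnitary : Matrix (Fin n) (Fin n) ℂ)

lemma star_U_mul_U : star (U hH) * U hH = 1 := by
  simpa [U] using (Matrix.mem_unitaryGroup_iff'.mp hH.eigenvectorUnitary.2)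

lemma U_mul_star_U : U hH * star (U hH) = 1 := by
  simpa [U] using (Matrix.mem_unitaryGroup_iff.mp hH.eigenvectorUnitary.2)

lemma specthm : H = U hH * diagonal (fun r => (hH.eigenvalues r : ℂ)) * star (U hH) := by
  simpa [U, Function.comp_def] using hH.spectral_theorem

lemma exp_smul_eq (t : ℝ) :
    NormedSpace.exp ((-(Complex.I * t)) • H) =
      U hH * diagonal (fun r => Complex.exp (-(Complex.I * t) * hH.eigenvalues r)) * star (U hH) := by
  have hinv : (U hH)⁻¹ = star (U hH) := Matrix.inv_eq_left_inv (star_U_mul_U hH)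
  have hU : IsUnit (U hH) := by
    apply Matrix.isUnit_iff_isUnit_det _ |>.mpr
    exact IsUnit.of_mul_eq_one _ (by rw [← Matrix.det_mul, U_mul_star_U hH, Matrix.det_one])
  have hsm : (-(Complex.I * t)) • H =
      U hH * ((-(Complex.I * t)) • diagonal (fun r => (hH.eigenvalues r : ℂ))) * (U hH)⁻¹ := by
    rw [hinv]
    conv_lhs => rw [specthm hH]
    rw [Matrix.mul_smul, Matrix.smul_mul]
  rw [hsm, Matrix.exp_conj _ _ hU, hinv]
  congr 2
  have hd : (-(Complex.I * t)) • (diagonal fun r => (hH.eigenvalues r : ℂ))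
      = diagonal (fun r => -(Complex.I * t) * hH.eigenvalues r) := by
    rw [← Matrix.diagonal_smul]
    congr 1
  have he : (NormedSpace.exp (fun r => -(Complex.I * t) * hH.eigenvalues r : Fin n → ℂ))
      = fun r => Complex.exp (-(Complex.I * t) * hH.eigenvalues r) := by
    funext r
    rw [Pi.coe_exp, ← Complex.exp_eq_exp_ℂ]
  rw [hd, Matrix.exp_diagonal, he]

lemma pst_key {a b : Fin n} {t : ℝ} (h : PST H a b t) :
    ∃ α : ℂ, ‖α‖ = 1 ∧ ∀ r,
      Complex.exp (-(Complex.I * t) * hH.eigenvalues r) * star (U hH) r a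
        = α * star (U hH) r b := by
  obtain ⟨α, hα, heq⟩ := h
  refine ⟨α, hα, fun r => ?_⟩
  rw [exp_smul_eq hH t] at heq
  have h2 := congrArg (fun v => (star (U hH) *ᵥ v)) heq
  simp only [Matrix.mulVec_mulVec, Matrix.mulVec_smul] at h2
  rw [← Matrix.mul_assoc, ← Matrix.mul_assoc, star_U_mul_U hH, Matrix.one_mul] at h2
  have h3 := congrFun h2 r
  simp only [← Matrix.mulVec_mulVec] at h3
  simpa [Matrix.mulVec_diagonal, Matrix.mulVec_single, Pi.smul_apply, smul_eq_mul] using h3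

lemma abs_factor (t : ℝ) (x : ℝ) :
    ‖Complex.exp (-(Complex.I * t) * x)‖ = 1 := by
  rw [Complex.norm_exp]
  have : (-(Complex.I * t) * x).re = 0 := by simp
  rw [this, Real.exp_zero]

lemma col_orth (r s : Fin n) :
    (∑ a, (starRingEnd ℂ) (U hH a r) * U hH a s) = if r = s then 1 else 0 := by
  have := congrFun (congrFun (star_U_mul_U hH) r) s
  simp only [Matrix.mul_apply, Matrix.star_apply, Matrix.one_apply] at this
  simpa using this

lemma flat (hupst : ∀ a b : Fin n, ∃ t : ℝ, 0 < t ∧ PST H a b t) (r : Fin n) (a : Fin n) :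
    U hH a r ≠ 0 := by
  have habs : ∀ b c : Fin n, ‖U hH b r‖ = ‖U hH c r‖ := by
    intro b c
    obtain ⟨t, _, hpst⟩ := hupst b c
    obtain ⟨α, hα, hkey⟩ := pst_key hH hpst
    have h1 := congrArg norm (hkey r)
    simp only [norm_mul, hα, abs_factor, one_mul, Matrix.star_apply,
      Complex.star_def, Complex.norm_conj] at h1
    exact h1
  intro h0
  have hzero : ∀ b, U hH b r = 0 := by
    intro b
    have hb := habs b a
    rw [h0] at hb
    simp only [norm_zero] at hb
    exact norm_eq_zero.mp hb
  have hco := col_orth hH r r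
  simp [hzero] at hco

lemma eig_inj (hupst : ∀ a b : Fin n, ∃ t : ℝ, 0 < t ∧ PST H a b t) :
    Function.Injective hH.eigenvalues := by
  intro r s hrs
  by_contra hne
  have hratio : ∀ b : Fin n,
      star (U hH) r b * star (U hH) s r = star (U hH) s b * star (U hH) r r := by
    intro b
    obtain ⟨t, _, hpst⟩ := hupst r b
    obtain ⟨α, hα, hkey⟩ := pst_key hH hpst
    have e1 := hkey r
    have e2 := hkey s
    rw [← hrs] at e2
    have hα0 : α ≠ 0 := by
      intro h; rw [h] at hα; simpa using hα
    have h3 : α * (star (U hH) r b * star (U hH) s r)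
        = α * (star (U hH) s b * star (U hH) r r) := by
      linear_combination (-(star (U hH) s r)) * e1 + star (U hH) r r * e2
    exact mul_left_cancel₀ hα0 h3
  -- translate to unconjugated entries
  have hratio' : ∀ b : Fin n, U hH b r * U hH r s = U hH b s * U hH r r := by
    intro b
    have := congrArg (starRingEnd ℂ) (hratio b)
    simpa [Matrix.star_apply, mul_comm] using this
  have hsum0 := col_orth hH r s
  rw [if_neg hne] at hsum0
  have hsum1 := col_orth hH r r
  rw [if_pos rfl] at hsum1
  have hz0 : U hH r s = 0 := by
    have hcalc : U hH r s = U hH r r * ∑ b, (starRingEnd ℂ) (U hH b r) * U hH b s := by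
      rw [Finset.mul_sum]
      have : ∀ b ∈ Finset.univ, U hH r r * ((starRingEnd ℂ) (U hH b r) * U hH b s)
          = (starRingEnd ℂ) (U hH b r) * U hH b r * U hH r s := by
        intro b _
        have hb := hratio' b
        linear_combination (-(starRingEnd ℂ) (U hH b r)) * hb
      rw [Finset.sum_congr rfl this, ← Finset.sum_mul, hsum1, one_mul]
    rw [hcalc, hsum0, mul_zero]
  exact flat hH hupst s r hz0

lemma periodic (hupst : ∀ a b : Fin n, ∃ t : ℝ, 0 < t ∧ PST H a b t) (hn : 0 < n) :
    ∃ T : ℝ, 0 < T ∧ ∀ r s : Fin n, ∃ m : ℤ,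
      hH.eigenvalues r - hH.eigenvalues s = m * (2 * Real.pi / T) := by
  obtain ⟨T, hT, hpst⟩ := hupst ⟨0, hn⟩ ⟨0, hn⟩
  obtain ⟨α, hα, hkey⟩ := pst_key hH hpst
  refine ⟨T, hT, fun r s => ?_⟩
  have hexp : ∀ r : Fin n, Complex.exp (-(Complex.I * T) * hH.eigenvalues r) = α := by
    intro r
    have := hkey r
    have hnz : star (U hH) r ⟨0, hn⟩ ≠ 0 := by
      simp only [Matrix.star_apply, star_ne_zero]
      exact flat hH hupst r ⟨0, hn⟩
    exact mul_right_cancel₀ hnz this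
  have heq : Complex.exp (-(Complex.I * T) * hH.eigenvalues r)
      = Complex.exp (-(Complex.I * T) * hH.eigenvalues s) := by rw [hexp r, hexp s]
  rw [Complex.exp_eq_exp_iff_exists_int] at heq
  obtain ⟨m, hm⟩ := heq
  refine ⟨-m, ?_⟩
  -- hm : -(I T) λr = -(I T) λs + m * (2π I)
  have h2 : (Complex.I : ℂ) * (↑T * (↑(hH.eigenvalues r) - ↑(hH.eigenvalues s))
      + ↑(m : ℤ) * (2 * ↑Real.pi)) = 0 := by
    push_cast at hm ⊢
    linear_combination -hm
  have h3 : (↑T * (↑(hH.eigenvalues r) - ↑(hH.eigenvalues s))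
      + ↑(m : ℤ) * (2 * ↑Real.pi) : ℂ) = 0 := by
    have := mul_eq_zero.mp h2
    rcases this with h | h
    · exact absurd h Complex.I_ne_zero
    · exact h
  have h4 : T * (hH.eigenvalues r - hH.eigenvalues s) + (m : ℝ) * (2 * Real.pi) = 0 := by
    have := h3
    push_cast at this
    exact_mod_cast this
  have hT0 : T ≠ 0 := ne_of_gt hT
  field_simp
  push_cast
  linarith [h4]

lemma trace_zero (hor : IsOrientedAdj H) : (∑ r, hH.eigenvalues r) = 0 := by
  have h1 : H.trace = 0 := by
    simp [Matrix.trace, Matrix.diag, hor.2.1]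
  have h2 : H.trace = ∑ r, (hH.eigenvalues r : ℂ) := by
    conv_lhs => rw [specthm hH]
    rw [Matrix.trace_mul_cycle, star_U_mul_U hH, Matrix.one_mul]
    simp [Matrix.trace, Matrix.diag, Matrix.diagonal]
  rw [h1] at h2
  have : ((∑ r, hH.eigenvalues r : ℝ) : ℂ) = 0 := by push_cast; rw [← h2]
  exact_mod_cast this

lemma sum_sq_eigen (hor : IsOrientedAdj H) :
    ∃ N : ℕ, (N : ℝ) = (∑ r, hH.eigenvalues r ^ 2) ∧ N ≤ n * n - n := by
  classical
  set D := diagonal (fun r => (hH.eigenvalues r : ℂ)) with hD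
  have hHH : H * H = U hH * (D * D) * star (U hH) := by
    conv_lhs => rw [specthm hH]
    calc (U hH * D * star (U hH)) * (U hH * D * star (U hH))
        = U hH * D * ((star (U hH) * U hH) * (D * star (U hH))) := by noncomm_ring
      _ = U hH * (D * D) * star (U hH) := by
          rw [star_U_mul_U hH, Matrix.one_mul]; noncomm_ring
  have h2 : (H * H).trace = ∑ r, ((hH.eigenvalues r : ℂ)) ^ 2 := by
    rw [hHH, Matrix.trace_mul_cycle, star_U_mul_U hH, Matrix.one_mul, hD,
      Matrix.diagonal_mul_diagonal]
    simp [Matrix.trace, Matrix.diag, Matrix.diagonal, sq]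
  have hent : ∀ a b : Fin n, H a b * H b a = (if H a b ≠ 0 then (1 : ℂ) else 0) := by
    intro a b
    have hba : H b a = star (H a b) := by
      conv_lhs => rw [← hH]
      simp [Matrix.conjTranspose_apply]
    rcases hor.2.2 a b with h | h | h <;>
      simp [h, hba, Complex.I_ne_zero, Complex.ext_iff]
  have h3 : (H * H).trace = ((Finset.univ.filter
      (fun p : Fin n × Fin n => H p.1 p.2 ≠ 0)).card : ℂ) := by
    rw [← Finset.sum_boole, Matrix.trace]
    simp only [Matrix.diag, Matrix.mul_apply]
    rw [← Finset.univ_product_univ, Finset.sum_product]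
    exact Finset.sum_congr rfl (fun a _ => Finset.sum_congr rfl (fun b _ => hent a b))
  refine ⟨(Finset.univ.filter (fun p : Fin n × Fin n => H p.1 p.2 ≠ 0)).card, ?_, ?_⟩
  · have := h3.symm.trans h2
    have h4 : (((Finset.univ.filter (fun p : Fin n × Fin n => H p.1 p.2 ≠ 0)).card : ℝ) : ℂ)
        = ((∑ r, hH.eigenvalues r ^ 2 : ℝ) : ℂ) := by
      push_cast
      convert this using 2
    exact_mod_cast h4
  · have hsub : (Finset.univ.filter (fun p : Fin n × Fin n => H p.1 p.2 ≠ 0))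
        ⊆ (Finset.univ : Finset (Fin n)).offDiag := by
      intro p hp
      rw [Finset.mem_filter] at hp
      rw [Finset.mem_offDiag]
      refine ⟨Finset.mem_univ _, Finset.mem_univ _, ?_⟩
      intro hpe
      exact hp.2 (by rw [← hpe] at *; exact hpe ▸ hor.2.1 p.1)
    have := Finset.card_le_card hsub
    rwa [Finset.offDiag_card, Finset.card_univ, Fintype.card_fin] at this

open Polynomial in
lemma I_isIntegral : IsIntegral ℤ Complex.I := by
  refine ⟨X ^ 2 + C 1, monic_X_pow_add_C 1 two_ne_zero, ?_⟩
  simp [eval₂_add, eval₂_pow, eval₂_X, eval₂_C, Complex.I_sq]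

lemma entries_integral (hor : IsOrientedAdj H) (a b : Fin n) :
    H a b ∈ integralClosure ℤ ℂ := by
  rcases hor.2.2 a b with h | h | h <;> rw [h]
  · exact Subalgebra.zero_mem _
  · exact I_isIntegral
  · exact (I_isIntegral).neg

open Polynomial in
lemma eig_integral (hor : IsOrientedAdj H) (r : Fin n) :
    IsIntegral ℤ ((hH.eigenvalues r : ℂ)) := by
  classical
  set μ : ℂ := (hH.eigenvalues r : ℂ) with hμ
  -- the eigenvector column
  set v : Fin n → ℂ := fun a => U hH a r with hv
  have hvne : v ≠ 0 := by
    intro h0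
    have hco := col_orth hH r r
    rw [if_pos rfl] at hco
    have : ∀ a, U hH a r = 0 := fun a => congrFun h0 a
    simp [this] at hco
  have hHU : H * U hH = U hH * diagonal (fun k => (hH.eigenvalues k : ℂ)) := by
    have h0 := congrArg (fun M => M * U hH) (specthm hH)
    rw [Matrix.mul_assoc, star_U_mul_U hH, Matrix.mul_one] at h0
    exact h0
  have hev : H *ᵥ v = μ • v := by
    funext a
    have h1 : (H *ᵥ v) a = (H * U hH) a r := by
      simp [Matrix.mulVec, Matrix.mul_apply, hv, dotProduct]
    have h2 := congrFun (congrFun hHU a) r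
    rw [Matrix.mul_diagonal] at h2
    rw [h1, h2]
    simp [hv, mul_comm, hμ]
  have hdet : (μ • (1 : Matrix (Fin n) (Fin n) ℂ) - H).det = 0 := by
    rw [← Matrix.exists_mulVec_eq_zero_iff]
    refine ⟨v, hvne, ?_⟩
    rw [Matrix.sub_mulVec, Matrix.smul_mulVec, Matrix.one_mulVec, hev, sub_self]
  have hcp : (Matrix.charpoly H).eval μ = 0 := by
    rw [Matrix.charpoly, eval_det, Matrix.matPolyEquiv_charmatrix]
    rw [Polynomial.eval_sub, Polynomial.eval_X, Polynomial.eval_C]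
    rw [Matrix.scalar_apply, ← Matrix.smul_one_eq_diagonal]
    exact hdet
  -- matrix over the integral closure
  set A := integralClosure ℤ ℂ with hA
  set H'' : Matrix (Fin n) (Fin n) A := fun a b => ⟨H a b, entries_integral hor a b⟩ with hH''
  have hmap : H''.map (algebraMap A ℂ) = H := by
    ext a b; rfl
  have hint : IsIntegral A μ := by
    refine ⟨H''.charpoly, Matrix.charpoly_monic _, ?_⟩
    rw [Polynomial.eval₂_eq_eval_map, ← Matrix.charpoly_map H'' (algebraMap A ℂ), hmap]
    exact hcp
  have hinj : Function.Injective (algebraMap A ℂ) := fun x y hxy => Subtype.ext hxy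
  haveI : Algebra.IsIntegral ℤ A := ⟨fun x => by
    have hx : IsIntegral ℤ (x : ℂ) := x.2
    exact (isIntegral_algebraMap_iff hinj).mp hx⟩
  exact isIntegral_trans μ hint

lemma rat_int_of_integral (q : ℚ) (h : IsIntegral ℤ ((q : ℂ))) : ∃ z : ℤ, (z : ℚ) = q := by
  have h1 : IsIntegral ℤ q := by
    have : algebraMap ℚ ℂ q = (q : ℂ) := by
      exact_mod_cast eq_ratCast ((algebraMap ℚ ℂ) : ℚ →+* ℂ) q
    exact (isIntegral_algebraMap_iff ((algebraMap ℚ ℂ).injective)).mp (this ▸ h)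
  obtain ⟨z, hz⟩ := IsIntegrallyClosed.isIntegral_iff.mp h1
  exact ⟨z, by exact_mod_cast hz⟩

lemma gauss1 (N : ℕ) : (∑ i ∈ Finset.range N, (i : ℤ)) * 2 = N * (N - 1) := by
  induction N with
  | zero => simp
  | succ N ih =>
    rw [Finset.sum_range_succ, add_mul, ih]
    push_cast
    ring

lemma gauss2 (N : ℕ) : (∑ i ∈ Finset.range N, (i : ℤ) ^ 2) * 6 = N * (N - 1) * (2 * N - 1) := by
  induction N with
  | zero => simp
  | succ N ih =>
    rw [Finset.sum_range_succ, add_mul, ih]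
    push_cast
    ring

lemma sm_ge {m : ℕ} (g : Fin m → ℤ) (hg : StrictMono g) :
    ∀ d : ℕ, ∀ i j : Fin m, i.val = j.val + d → (d : ℤ) ≤ g i - g j := by
  intro d
  induction d with
  | zero =>
    intro i j h
    have : i = j := Fin.ext (by omega)
    simp [this]
  | succ d ih =>
    intro i j h
    have hd : j.val + d < m := by omega
    have h1 := ih ⟨j.val + d, hd⟩ j rfl
    have h2 : (⟨j.val + d, hd⟩ : Fin m) < i := by
      rw [Fin.lt_def]; simp; omega
    have h3 := hg h2
    push_cast
    omega

lemma expand_sum {m : ℕ} (f : Fin m → ℤ) :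
    ∑ i, ∑ j, (f i - f j) ^ 2
      = 2 * m * (∑ i, (f i) ^ 2) - 2 * (∑ i, f i) ^ 2 := by
  have h1 : ∀ i : Fin m, ∑ j, (f i - f j) ^ 2
      = m * (f i) ^ 2 - 2 * f i * (∑ j, f j) + (∑ j, (f j) ^ 2) := by
    intro i
    have : ∀ j ∈ Finset.univ, (f i - f j) ^ 2
        = (f i) ^ 2 - 2 * f i * f j + (f j) ^ 2 := fun j _ => by ring
    rw [Finset.sum_congr rfl this, Finset.sum_add_distrib, Finset.sum_sub_distrib,
      Finset.sum_const, Finset.card_univ, Fintype.card_fin, ← Finset.mul_sum]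
    push_cast
    ring
  rw [Finset.sum_congr rfl (fun i _ => h1 i), Finset.sum_add_distrib,
    Finset.sum_sub_distrib, Finset.sum_const, Finset.card_univ, Fintype.card_fin,
    ← Finset.sum_mul, ← Finset.mul_sum]
  rw [show ∑ x : Fin m, 2 * f x = 2 * ∑ x : Fin m, f x from (Finset.mul_sum _ _ _).symm]
  push_cast
  ring

lemma sum_sq_lower {m : ℕ} (k : Fin m → ℤ) (hk : Function.Injective k) :
    (m : ℤ) * ((m : ℤ) ^ 2 - 1) ≤ 12 * ∑ r, (k r) ^ 2 := by
  rcases Nat.eq_zero_or_pos m with hm | hm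
  · subst hm; simp
  classical
  set S : Finset ℤ := Finset.univ.image k with hS
  have hcard : S.card = m := by
    rw [hS, Finset.card_image_of_injective _ hk, Finset.card_univ, Fintype.card_fin]
  set g : Fin m → ℤ := fun i => (S.orderIsoOfFin hcard i : ℤ) with hg
  have hgmono : StrictMono g := fun i j hij => by
    have := (S.orderIsoOfFin hcard).strictMono hij
    exact_mod_cast this
  have hsum_eq : ∑ r, (k r) ^ 2 = ∑ i, (g i) ^ 2 := by
    have e1 : ∑ r, (k r) ^ 2 = ∑ x ∈ S, x ^ 2 := by
      rw [hS, Finset.sum_image (fun x _ y _ h => hk h)]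
    have e2 : ∑ x ∈ S, x ^ 2 = ∑ i : Fin m, (g i) ^ 2 := by
      rw [← Finset.sum_coe_sort S (fun x => (x : ℤ) ^ 2)]
      exact (Equiv.sum_comp (S.orderIsoOfFin hcard).toEquiv (fun x => (x : ℤ) ^ 2)).symm
    rw [e1, e2]
  have hsumT_eq : ∑ r, k r = ∑ i, g i := by
    have e1 : ∑ r, k r = ∑ x ∈ S, x := by
      rw [hS, Finset.sum_image (fun x _ y _ h => hk h)]
    have e2 : ∑ x ∈ S, x = ∑ i : Fin m, g i := by
      rw [← Finset.sum_coe_sort S (fun x => (x : ℤ))]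
      exact (Equiv.sum_comp (S.orderIsoOfFin hcard).toEquiv (fun x => (x : ℤ))).symm
    rw [e1, e2]
  -- pointwise inequality
  have hpt : ∀ i j : Fin m, ((i : ℤ) - (j : ℤ)) ^ 2 ≤ (g i - g j) ^ 2 := by
    intro i j
    rcases le_total j.val i.val with h | h
    · have := sm_ge g hgmono (i.val - j.val) i j (by omega)
      have hc : ((i.val - j.val : ℕ) : ℤ) = (i : ℤ) - (j : ℤ) := by push_cast; omega
      rw [hc] at this
      nlinarith [this, sub_nonneg.mpr (le_of_lt (by positivity : (0:ℤ) < 1))]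
    · have := sm_ge g hgmono (j.val - i.val) j i (by omega)
      have hc : ((j.val - i.val : ℕ) : ℤ) = (j : ℤ) - (i : ℤ) := by push_cast; omega
      rw [hc] at this
      nlinarith
  have hAB : ∑ i : Fin m, ∑ j : Fin m, ((i : ℤ) - (j : ℤ)) ^ 2
      ≤ ∑ i : Fin m, ∑ j : Fin m, (g i - g j) ^ 2 :=
    Finset.sum_le_sum fun i _ => Finset.sum_le_sum fun j _ => hpt i j
  have hA := expand_sum g
  have hB := expand_sum (fun i : Fin m => (i : ℤ))
  have hg1 : (∑ i : Fin m, (i : ℤ)) * 2 = m * (m - 1) := by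
    rw [Fin.sum_univ_eq_sum_range (fun i => (i : ℤ))]
    exact gauss1 m
  have hg2 : (∑ i : Fin m, (i : ℤ) ^ 2) * 6 = m * (m - 1) * (2 * m - 1) := by
    rw [Fin.sum_univ_eq_sum_range (fun i => (i : ℤ) ^ 2)]
    exact gauss2 m
  rw [← hsum_eq] at hA
  rw [← hsumT_eq] at hA
  nlinarith [hAB, hA, hB, hg1, hg2, sq_nonneg (∑ r, k r)]

lemma rat_of_sq_mul_squarefree (x : ℚ) (Δ : ℕ) (hΔ : Squarefree Δ) (z : ℤ)
    (hz : x ^ 2 * (Δ : ℚ) = (z : ℚ)) : ∃ k : ℤ, (k : ℚ) = x := by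
  have hden : ((x.den : ℚ)) ≠ 0 := by exact_mod_cast x.den_nz
  have hx : (x.num : ℚ) / (x.den : ℚ) = x := Rat.num_div_den x
  have hint : (x.num : ℚ) ^ 2 * (Δ : ℚ) = (z : ℚ) * (x.den : ℚ) ^ 2 := by
    rw [← hx] at hz
    field_simp at hz
    linarith [hz]
  have hint2 : x.num ^ 2 * (Δ : ℤ) = z * (x.den : ℤ) ^ 2 := by exact_mod_cast hint
  have hdvd : ((x.den : ℤ)) ^ 2 ∣ x.num ^ 2 * (Δ : ℤ) := ⟨z, by linarith [hint2]⟩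
  have hdvdn : x.den ^ 2 ∣ x.num.natAbs ^ 2 * Δ := by
    have := Int.natAbs_dvd_natAbs.mpr hdvd
    simpa [Int.natAbs_mul, Int.natAbs_pow] using this
  have hcop : Nat.Coprime (x.den ^ 2) (x.num.natAbs ^ 2) :=
    Nat.Coprime.pow 2 2 (x.reduced.symm)
  have hdvdΔ : x.den ^ 2 ∣ Δ :=
    hcop.dvd_of_dvd_mul_left hdvdn
  have hd1 : x.den = 1 := by
    have := hΔ x.den (by rwa [← pow_two])
    exact Nat.isUnit_iff.mp this
  refine ⟨x.num, ?_⟩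
  rw [← hx, hd1]
  simp

lemma main_bound (hor : IsOrientedAdj H) (hupst : ∀ a b : Fin n, ∃ t : ℝ, 0 < t ∧ PST H a b t)
    (hn : 2 ≤ n) :
    ∃ Δ : ℕ, 1 ≤ Δ ∧ Δ * (n + 1) ≤ 12 ∧
      ∀ r, ∃ k : ℤ, hH.eigenvalues r = (k : ℝ) * Real.sqrt Δ := by
  classical
  set ev : Fin n → ℝ := hH.eigenvalues with hev
  have hn0 : 0 < n := by omega
  have hnR : (0:ℝ) < n := by exact_mod_cast hn0
  obtain ⟨T, hT, hper⟩ := periodic hH hupst hn0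
  choose mm hmm using hper
  set δ : ℝ := 2 * Real.pi / T with hδdef
  have hδ : 0 < δ := by
    have := Real.pi_pos
    positivity
  have htr := trace_zero hH hor
  set c : Fin n → ℤ := fun r => ∑ s, mm r s with hc
  have hcstar : ∀ r, (n : ℝ) * ev r = (c r : ℝ) * δ := by
    intro r
    have h1 : ∑ s, (ev r - ev s) = n * ev r := by
      rw [Finset.sum_sub_distrib, htr, Finset.sum_const, Finset.card_univ, Fintype.card_fin]
      simp [nsmul_eq_mul]
    have h2 : ∑ s, (ev r - ev s) = (c r : ℝ) * δ := by
      rw [Finset.sum_congr rfl (fun s _ => hmm r s), hc]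
      push_cast
      rw [← Finset.sum_mul]
    rw [← h1, h2]
  have hevc : ∀ r s, ev r * (c s : ℝ) = ev s * (c r : ℝ) := by
    intro r s
    have h1 := hcstar r
    have h2 := hcstar s
    have h3 : (n:ℝ) * (ev r * (c s : ℝ)) = (n:ℝ) * (ev s * (c r : ℝ)) := by
      linear_combination (c s : ℝ) * h1 - (c r : ℝ) * h2
    exact mul_left_cancel₀ (ne_of_gt hnR) h3
  have hinj := eig_inj hH hupst
  have hcinj : Function.Injective c := by
    intro r s h
    apply hinj
    have h3 : (n:ℝ) * ev r = (n:ℝ) * ev s := by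
      rw [hcstar r, hcstar s, h]
    exact mul_left_cancel₀ (ne_of_gt hnR) h3
  obtain ⟨j, hj⟩ : ∃ j, ev j ≠ 0 := by
    by_contra h
    push_neg at h
    have h01 : (⟨0, by omega⟩ : Fin n) ≠ ⟨1, by omega⟩ := by simp [Fin.ext_iff]
    exact h01 (hinj ((h _).trans (h _).symm))
  have hcj : (c j : ℝ) ≠ 0 := by
    intro h0
    apply hj
    have := hcstar j
    rw [h0, zero_mul] at this
    have := mul_eq_zero.mp this
    rcases this with h | h
    · exact absurd h (ne_of_gt hnR)
    · exact h
  have hcjZ : c j ≠ 0 := fun h => hcj (by rw [h]; simp)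
  obtain ⟨N, hN, hNle⟩ := sum_sq_eigen hH hor
  rw [← hev] at hN
  set Sc : ℤ := ∑ r, (c r) ^ 2 with hSc
  have hScpos : 0 < Sc := by
    have h1 : (c j) ^ 2 ≤ Sc :=
      Finset.single_le_sum (fun i _ => sq_nonneg (c i)) (Finset.mem_univ j)
    have h2 : (0:ℤ) < (c j) ^ 2 := by positivity
    linarith
  have hScR : ((Sc : ℝ)) ≠ 0 := by
    have : (0:ℝ) < (Sc:ℝ) := by exact_mod_cast hScpos
    linarith
  have hsumsq : (∑ r, ev r ^ 2) * (c j : ℝ) ^ 2 = ev j ^ 2 * (Sc : ℝ) := by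
    rw [Finset.sum_mul]
    have : ((Sc:ℤ):ℝ) = ∑ r, ((c r : ℝ)) ^ 2 := by rw [hSc]; push_cast; ring
    rw [this, Finset.mul_sum]
    refine Finset.sum_congr rfl (fun r _ => ?_)
    have h := hevc r j
    linear_combination (ev r * (c j : ℝ) + ev j * (c r : ℝ)) * h
  set q1 : ℚ := (N : ℚ) * (c j : ℚ) ^ 2 / (Sc : ℚ) with hq1def
  have hq1r : ev j ^ 2 = (q1 : ℝ) := by
    rw [hq1def]
    push_cast
    rw [eq_div_iff hScR]
    linarith [hsumsq, congrArg (fun x : ℝ => x * (c j : ℝ)^2) hN]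
  have hIev : ∀ r, IsIntegral ℤ ((ev r : ℂ)) := fun r => eig_integral hH hor r
  have hIq1 : IsIntegral ℤ ((q1 : ℂ)) := by
    have h1 := (hIev j).mul (hIev j)
    have h2 : ((q1 : ℂ)) = ((ev j : ℝ) : ℂ) * ((ev j : ℝ) : ℂ) := by
      have h3 : ((ev j ^ 2 : ℝ) : ℂ) = (((q1 : ℝ)) : ℂ) := congrArg (fun x : ℝ => (x : ℂ)) hq1r
      calc ((q1 : ℂ)) = (((q1 : ℝ)) : ℂ) := by norm_cast
        _ = ((ev j ^ 2 : ℝ) : ℂ) := h3.symm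
        _ = _ := by push_cast; ring
    rw [h2]
    exact h1
  obtain ⟨m1, hm1⟩ := rat_int_of_integral q1 hIq1
  have hm1r : ev j ^ 2 = (m1 : ℝ) := by
    rw [hq1r, ← hm1]
    push_cast
    ring
  have hm1pos : 0 < m1 := by
    have h1 : (0:ℝ) < ev j ^ 2 := by positivity
    rw [hm1r] at h1
    exact_mod_cast h1
  obtain ⟨Δ, sq0, hΔs, hsf⟩ := Nat.sq_mul_squarefree m1.toNat
  have hm1toNat : (m1.toNat : ℤ) = m1 := Int.toNat_of_nonneg (le_of_lt hm1pos)
  have hm1tpos : 0 < m1.toNat := by omega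
  have hΔ0 : 0 < Δ := by
    rcases Nat.eq_zero_or_pos Δ with h | h
    · rw [h, mul_zero] at hΔs; omega
    · exact h
  have hs0 : 0 < sq0 := by
    rcases Nat.eq_zero_or_pos sq0 with h | h
    · rw [h] at hΔs; simp at hΔs; omega
    · exact h
  have hm1Q : (m1 : ℚ) = (sq0 : ℚ) ^ 2 * (Δ : ℚ) := by
    have h1 : ((sq0 ^ 2 * Δ : ℕ) : ℚ) = ((m1.toNat : ℕ) : ℚ) := Nat.cast_inj.mpr hΔs
    have h2 : ((m1.toNat : ℕ) : ℚ) = (m1 : ℚ) := by exact_mod_cast hm1toNat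
    rw [h2] at h1
    push_cast at h1
    rw [← h1]
  have hky : ∀ r, ∃ k : ℤ, ev r = (k : ℝ) * Real.sqrt Δ := by
    intro r
    set q2 : ℚ := (m1 : ℚ) * (c r : ℚ) ^ 2 / (c j : ℚ) ^ 2 with hq2def
    have hcjQ : ((c j : ℚ)) ≠ 0 := by exact_mod_cast hcjZ
    have hq2r : ev r ^ 2 = (q2 : ℝ) := by
      rw [hq2def]
      push_cast
      rw [eq_div_iff (by exact_mod_cast pow_ne_zero 2 hcjQ)]
      have h := hevc r j
      linear_combination (ev r * (c j : ℝ) + ev j * (c r : ℝ)) * h + ((c r : ℝ)) ^ 2 * hm1r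
    have hIq2 : IsIntegral ℤ ((q2 : ℂ)) := by
      have h1 := (hIev r).mul (hIev r)
      have h2 : ((q2 : ℂ)) = ((ev r : ℝ) : ℂ) * ((ev r : ℝ) : ℂ) := by
        have h3 : ((ev r ^ 2 : ℝ) : ℂ) = (((q2 : ℝ)) : ℂ) := congrArg (fun x : ℝ => (x : ℂ)) hq2r
        calc ((q2 : ℂ)) = (((q2 : ℝ)) : ℂ) := by norm_cast
          _ = ((ev r ^ 2 : ℝ) : ℂ) := h3.symm
          _ = _ := by push_cast; ring
      rw [h2]
      exact h1
    obtain ⟨z2, hz2⟩ := rat_int_of_integral q2 hIq2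
    set q3 : ℚ := (c r : ℚ) * (sq0 : ℚ) / (c j : ℚ) with hq3def
    have hq3 : q3 ^ 2 * (Δ : ℚ) = (z2 : ℚ) := by
      rw [hz2, hq3def, hq2def, div_pow, div_mul_eq_mul_div, div_eq_div_iff
        (by exact_mod_cast pow_ne_zero 2 hcjQ) (by exact_mod_cast pow_ne_zero 2 hcjQ)]
      rw [hm1Q]
      ring
    obtain ⟨k', hk'⟩ := rat_of_sq_mul_squarefree q3 Δ hsf z2 hq3
    have hevsq : ev r ^ 2 = ((k' : ℝ)) ^ 2 * (Δ : ℝ) := by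
      have h4 : q2 = (k' : ℚ) ^ 2 * (Δ : ℚ) := by rw [← hz2, ← hq3, hk']
      rw [hq2r, h4]
      push_cast
      ring
    have hΔR : (0:ℝ) ≤ (Δ : ℝ) := by positivity
    have hsqrt : Real.sqrt (ev r ^ 2) = |(k' : ℝ)| * Real.sqrt Δ := by
      rw [hevsq, Real.sqrt_mul (sq_nonneg _), Real.sqrt_sq_eq_abs]
    rcases le_or_gt 0 (ev r) with hpos | hneg
    · refine ⟨|k'|, ?_⟩
      have : ev r = Real.sqrt (ev r ^ 2) := (Real.sqrt_sq hpos).symm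
      rw [this, hsqrt]
      push_cast
      ring
    · refine ⟨-|k'|, ?_⟩
      have h5 : -ev r = Real.sqrt (ev r ^ 2) := by
        rw [Real.sqrt_sq_eq_abs, abs_of_neg hneg]
      have : ev r = -Real.sqrt (ev r ^ 2) := by linarith
      rw [this, hsqrt]
      push_cast
      ring
  choose k hk using hky
  have hkinj : Function.Injective k := by
    have hsΔ : Real.sqrt Δ ≠ 0 := by
      have : (0:ℝ) < Real.sqrt Δ := Real.sqrt_pos.mpr (by exact_mod_cast hΔ0)
      linarith
    intro r s hrs
    apply hinj
    show ev r = ev s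
    rw [hk r, hk s, hrs]
  have hsq : ∀ r, ev r ^ 2 = ((k r : ℝ)) ^ 2 * (Δ : ℝ) := by
    intro r
    rw [hk r, mul_pow, Real.sq_sqrt (by positivity : (0:ℝ) ≤ (Δ:ℝ))]
  have hsum : (N : ℝ) = (Δ : ℝ) * (((∑ r, (k r) ^ 2 : ℤ) : ℤ) : ℝ) := by
    rw [hN, Finset.sum_congr rfl (fun r _ => hsq r), ← Finset.sum_mul]
    push_cast
    ring
  have hlow := sum_sq_lower k hkinj
  refine ⟨Δ, hΔ0, ?_, fun r => ⟨k r, hk r⟩⟩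
  -- final arithmetic
  set K : ℝ := (((∑ r, (k r) ^ 2 : ℤ) : ℤ) : ℝ) with hK
  have hlowR : (n : ℝ) * ((n : ℝ) ^ 2 - 1) ≤ 12 * K := by rw [hK]; exact_mod_cast hlow
  have hNleR : (N : ℝ) ≤ (n : ℝ) * (n : ℝ) - (n : ℝ) := by
    have h1 : (N : ℝ) ≤ ((n * n - n : ℕ) : ℝ) := by exact_mod_cast hNle
    have h2 : ((n * n - n : ℕ) : ℝ) = (n:ℝ) * n - n := by
      have : n ≤ n * n := Nat.le_mul_of_pos_left n hn0
      push_cast [Nat.cast_sub this]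
      ring
    linarith [h1, h2.symm.le, h2.le]
  have hΔR : (1:ℝ) ≤ (Δ : ℝ) := by exact_mod_cast hΔ0
  have hfinR : (Δ : ℝ) * ((n : ℝ) + 1) ≤ 12 := by
    have e1 : (Δ:ℝ) * ((n:ℝ) * ((n:ℝ)^2 - 1)) ≤ (Δ:ℝ) * (12 * K) :=
      mul_le_mul_of_nonneg_left hlowR (by positivity)
    have e2 : (Δ:ℝ) * (12 * K) = 12 * (N : ℝ) := by rw [hsum]; ring
    have e4 : (Δ:ℝ) * ((n:ℝ) + 1) * ((n:ℝ) * ((n:ℝ) - 1)) ≤ 12 * ((n:ℝ) * ((n:ℝ) - 1)) := by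
      have e5 : (Δ:ℝ) * ((n:ℝ) + 1) * ((n:ℝ) * ((n:ℝ) - 1)) = (Δ:ℝ) * ((n:ℝ) * ((n:ℝ)^2 - 1)) := by
        ring
      have e6 : 12 * ((n:ℝ) * ((n:ℝ) - 1)) = 12 * ((n:ℝ) * (n:ℝ) - (n:ℝ)) := by ring
      rw [e5, e6]
      calc (Δ:ℝ) * ((n:ℝ) * ((n:ℝ)^2 - 1)) ≤ (Δ:ℝ) * (12 * K) := e1
        _ = 12 * (N:ℝ) := e2
        _ ≤ 12 * ((n:ℝ) * (n:ℝ) - (n:ℝ)) := by linarith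
    have hP : (0:ℝ) < (n:ℝ) * ((n:ℝ) - 1) := by
      have : (2:ℝ) ≤ (n:ℝ) := by exact_mod_cast hn
      nlinarith
    exact le_of_mul_le_mul_right e4 hP
  have : ((Δ * (n + 1) : ℕ) : ℝ) ≤ 12 := by push_cast; linarith [hfinR]
  exact_mod_cast this

end UPSTaux

/-- If an oriented graph on `n` vertices admits universal perfect state transfer
then `n ≤ 11`; moreover if `n ≥ 6` then all eigenvalues are integers. -/
theorem stmt3 {n : ℕ} (H : Matrix (Fin n) (Fin n) ℂ) (hH : H.IsHermitian)
    (hor : IsOrientedAdj H)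
    (hupst : ∀ a b : Fin n, ∃ t : ℝ, 0 < t ∧ PST H a b t) :
    n ≤ 11 ∧ (6 ≤ n → ∀ r, ∃ k : ℤ, hH.eigenvalues r = k) := by
  by_cases hn : 2 ≤ n
  · obtain ⟨Δ, hΔ1, hΔb, hk⟩ := UPSTaux.main_bound hH hor hupst hn
    constructor
    · by_contra h
      push_neg at h
      have h2 : n + 1 ≤ Δ * (n + 1) := Nat.le_mul_of_pos_left _ (by omega)
      omega
    · intro h6 r
      have hΔe : Δ = 1 := by
        have h7 : Δ * 7 ≤ Δ * (n + 1) := Nat.mul_le_mul_left Δ (by omega)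
        omega
      obtain ⟨k, hkr⟩ := hk r
      refine ⟨k, ?_⟩
      rw [hkr, hΔe]
      simp
  · refine ⟨by omega, fun h6 => absurd h6 (by omega)⟩
end

section
/- Let H_C4 be the 4×4 Hermitian matrix with (H_C4)_{12} = −i, (H_C4)_{23} = −i, (H_C4)_{34} = −i, (H_C4)_{41} = −i (and conjugate transposed entries), zero elsewhere. For any odd integer θ, exp(−i(π/4)(H_C4 + θ J_4)) equals the 4×4 matrix with entries −1 in positions (1,2),(2,3),(3,4),(4,1) and 0 elsewhere. -/
open Matrix

/-- The Hermitian adjacency matrix of the oriented 4-cycle. -/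
noncomputable def HC4 : Matrix (Fin 4) (Fin 4) ℂ :=
  !![0, -Complex.I, 0, Complex.I;
     Complex.I, 0, -Complex.I, 0;
     0, Complex.I, 0, -Complex.I;
     -Complex.I, 0, Complex.I, 0]

/-- The Fourier matrix of order 4. -/
noncomputable def Pm : Matrix (Fin 4) (Fin 4) ℂ :=
  !![1,1,1,1; 1,Complex.I,-1,-Complex.I; 1,-1,1,-1; 1,-Complex.I,-1,Complex.I]

/-- The inverse Fourier matrix of order 4. -/
noncomputable def Qm : Matrix (Fin 4) (Fin 4) ℂ :=
  (4:ℂ)⁻¹ • !![1,1,1,1; 1,-Complex.I,-1,Complex.I; 1,-1,1,-1; 1,Complex.I,-1,-Complex.I]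

theorem hPQ : Pm * Qm = 1 := by
  ext i j
  fin_cases i <;> fin_cases j <;>
    simp [Pm, Qm, Matrix.mul_apply, Fin.sum_univ_four, Matrix.one_apply] <;> ring_nf <;>
    simp [Complex.I_sq] <;> ring

theorem hQP : Qm * Pm = 1 := by
  ext i j
  fin_cases i <;> fin_cases j <;>
    simp [Pm, Qm, Matrix.mul_apply, Fin.sum_univ_four, Matrix.one_apply] <;> ring_nf <;>
    simp [Complex.I_sq] <;> ring

/-- `Pm` as a unit. -/
noncomputable def Pu : (Matrix (Fin 4) (Fin 4) ℂ)ˣ := ⟨Pm, Qm, hPQ, hQP⟩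

theorem diagExplicit (a b c d : ℂ) :
    Matrix.diagonal ![a,b,c,d] = !![a,0,0,0; 0,b,0,0; 0,0,c,0; 0,0,0,d] := by
  ext i j
  fin_cases i <;> fin_cases j <;>
    simp [Matrix.diagonal_apply, Matrix.vecHead, Matrix.vecTail]

set_option maxHeartbeats 1000000 in
theorem hM (c : ℂ) (θ : ℤ) :
    c • (HC4 + (θ : ℂ) • (Matrix.of fun _ _ => (1 : ℂ) : Matrix (Fin 4) (Fin 4) ℂ))
      = Pm * Matrix.diagonal ![c*(4*θ), c*2, 0, c*(-2)] * Qm := by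
  rw [diagExplicit]
  ext i j
  fin_cases i <;> fin_cases j <;>
    simp [Pm, Qm, HC4, Matrix.mul_apply, Fin.sum_univ_four, Matrix.smul_apply,
      Matrix.add_apply, Matrix.of_apply, Matrix.vecHead, Matrix.vecTail, smul_eq_mul] <;>
    ring_nf <;> simp [Complex.I_sq] <;> ring

set_option maxHeartbeats 1000000 in
theorem hFin :
    Pm * Matrix.diagonal ![-1, -Complex.I, 1, Complex.I] * Qm
      = !![0, -1, 0, 0; 0, 0, -1, 0; 0, 0, 0, -1; -1, 0, 0, 0] := by
  rw [diagExplicit]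
  ext i j
  fin_cases i <;> fin_cases j <;>
    simp [Pm, Qm, Matrix.mul_apply, Fin.sum_univ_four, Matrix.smul_apply,
      Matrix.vecHead, Matrix.vecTail, smul_eq_mul] <;>
    ring_nf <;> simp [Complex.I_sq] <;> ring

/-- For any odd integer `θ`,
`exp(−i(π/4)(H_C4 + θ J_4))` is the matrix with `−1` in positions
`(1,2), (2,3), (3,4), (4,1)` and `0` elsewhere. -/
theorem stmt6 (θ : ℤ) (hθ : Odd θ) :
    NormedSpace.exp ((-(Complex.I * (Real.pi / 4))) •
        (HC4 + (θ : ℂ) • (Matrix.of fun _ _ => (1 : ℂ) : Matrix (Fin 4) (Fin 4) ℂ)))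
      = !![0, -1, 0, 0;
           0, 0, -1, 0;
           0, 0, 0, -1;
           -1, 0, 0, 0] := by
  set c : ℂ := -(Complex.I * (Real.pi / 4)) with hc
  have key : c • (HC4 + (θ : ℂ) • (Matrix.of fun _ _ => (1 : ℂ) : Matrix (Fin 4) (Fin 4) ℂ))
      = (Pu : Matrix (Fin 4) (Fin 4) ℂ) * Matrix.diagonal ![c*(4*θ), c*2, 0, c*(-2)] *
        ((Pu⁻¹ : (Matrix (Fin 4) (Fin 4) ℂ)ˣ) : Matrix (Fin 4) (Fin 4) ℂ) := hM c θ
  rw [key, Matrix.exp_units_conj, Matrix.exp_diagonal]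
  have hv : NormedSpace.exp ![c*(4*θ), c*2, 0, c*(-2)]
      = ![-1, -Complex.I, 1, Complex.I] := by
    funext i
    rw [Pi.coe_exp, ← Complex.exp_eq_exp_ℂ]
    fin_cases i
    · show Complex.exp (c*(4*θ)) = -1
      have : c*(4*θ) = (θ : ℂ) * -((Real.pi : ℂ) * Complex.I) := by rw [hc]; ring
      rw [this, Complex.exp_int_mul, Complex.exp_neg, Complex.exp_pi_mul_I]
      rw [show ((-1:ℂ))⁻¹ = -1 by norm_num, hθ.neg_one_zpow]
    · show Complex.exp (c*2) = -Complex.I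
      have : c*2 = (-((Real.pi : ℂ)/2)) * Complex.I := by rw [hc]; ring
      rw [this, Complex.exp_mul_I]; simp
    · show Complex.exp 0 = 1
      exact Complex.exp_zero
    · show Complex.exp (c*(-2)) = Complex.I
      have : c*(-2) = ((Real.pi : ℂ)/2) * Complex.I := by rw [hc]; ring
      rw [this, Complex.exp_mul_I]; simp
  rw [hv]
  exact hFin
end

section
/- In a Hermitian graph with adjacency matrix H = Σ_r θ_r E_r, a vertex a is periodic (there exist τ > 0 and unimodular α with exp(−iτH)e_a = α e_a) if and only if the ratio condition holds on the eigenvalue support of a: (θ_r − θ_s)/(θ_h − θ_ℓ) ∈ ℚ for all θ_r, θ_s, θ_h, θ_ℓ in Φ_a with θ_h ≠ θ_ℓ. -/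
open Matrix NormedSpace

lemma exp_mulVec_eigen {n : ℕ} (A : Matrix (Fin n) (Fin n) ℂ) (v : Fin n → ℂ) (μ : ℂ)
    (h : A *ᵥ v = μ • v) : exp A *ᵥ v = Complex.exp μ • v := by
  letI : SeminormedRing (Matrix (Fin n) (Fin n) ℂ) := Matrix.linftyOpSemiNormedRing
  letI : NormedRing (Matrix (Fin n) (Fin n) ℂ) := Matrix.linftyOpNormedRing
  letI : NormedAlgebra ℂ (Matrix (Fin n) (Fin n) ℂ) := Matrix.linftyOpNormedAlgebra
  have hpow : ∀ k : ℕ, A ^ k *ᵥ v = μ ^ k • v := by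
    intro k
    induction k with
    | zero => simp
    | succ k ih =>
      rw [pow_succ', ← Matrix.mulVec_mulVec, ih, Matrix.mulVec_smul, h, smul_smul, ← pow_succ]
  have hsum : Summable (fun k : ℕ => (k.factorial⁻¹ : ℂ) • A ^ k) :=
    NormedSpace.expSeries_summable' A
  let f : Matrix (Fin n) (Fin n) ℂ →ₗ[ℂ] (Fin n → ℂ) :=
    { toFun := fun B => B *ᵥ v
      map_add' := fun B C => Matrix.add_mulVec B C v
      map_smul' := fun c B => Matrix.smul_mulVec c B v }
  let f' : Matrix (Fin n) (Fin n) ℂ →L[ℂ] (Fin n → ℂ) := LinearMap.toContinuousLinearMap f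
  have hfa : ∀ B, f' B = B *ᵥ v := fun B => rfl
  have h1 : exp A *ᵥ v = f' (∑' k : ℕ, (k.factorial⁻¹ : ℂ) • A ^ k) := by
    rw [hfa, exp_eq_tsum ℂ]
  rw [h1, f'.map_tsum hsum]
  have h2 : ∀ k : ℕ, f' ((k.factorial⁻¹ : ℂ) • A ^ k) = ((k.factorial⁻¹ : ℂ) * μ ^ k) • v := by
    intro k
    rw [f'.map_smul, hfa, hpow, smul_smul]
  simp_rw [h2]
  rw [Summable.tsum_smul_const]
  · congr 1
    rw [Complex.exp_eq_exp_ℂ, exp_eq_tsum ℂ]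
    exact (tsum_congr fun k => (smul_eq_mul (α := ℂ) _ _).symm ▸ rfl).symm
  · have := NormedSpace.expSeries_summable' (𝕂 := ℂ) μ
    simpa [smul_eq_mul] using this

lemma aux_im (τ x y : ℝ) (M : ℤ) :
    (-(Complex.I*τ)*x = -(Complex.I*τ)*y + M*(2*Real.pi*Complex.I)) ↔ τ*(y - x) = 2*Real.pi*M := by
  rw [Complex.ext_iff]
  simp [Complex.mul_re, Complex.mul_im]
  constructor
  · intro h; linarith
  · intro h; linarith

lemma aux_den_dvd (q : ℚ) (N : ℕ) (h : (q.den : ℕ) ∣ N) : ∃ z : ℤ, (q * N : ℚ) = z := by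
  obtain ⟨c, hc⟩ := h
  refine ⟨q.num * c, ?_⟩
  subst hc
  push_cast
  rw [← mul_assoc, Rat.mul_den_eq_num]

lemma sum_mulVec' {κ m : Type} [Fintype κ] [Fintype m] (M : κ → Matrix m m ℂ) (v : m → ℂ) :
    (∑ i, M i) *ᵥ v = ∑ i, M i *ᵥ v := by
  funext j
  simp only [Matrix.mulVec, dotProduct, Matrix.sum_apply, Finset.sum_apply, Finset.sum_mul]
  rw [Finset.sum_comm]

/-- A vertex `a` of a Hermitian graph with spectral decomposition `H = Σ_r θ_r E_r`
is periodic iff the ratio condition holds on the eigenvalue support of `a`. -/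
theorem stmt9 {n : ℕ} (H : Matrix (Fin n) (Fin n) ℂ) (hH : H.IsHermitian)
    {ι : Type} [Fintype ι] (θ : ι → ℝ) (E : ι → Matrix (Fin n) (Fin n) ℂ)
    (hθ : Function.Injective θ)
    (hdecomp : H = ∑ r, (θ r : ℂ) • E r)
    (hone : ∑ r, E r = 1)
    (hherm : ∀ r, (E r)ᴴ = E r)
    (hidem : ∀ r, E r * E r = E r)
    (horth : ∀ r s, r ≠ s → E r * E s = 0)
    (a : Fin n) :
    (∃ τ : ℝ, 0 < τ ∧ ∃ α : ℂ, ‖α‖ = 1 ∧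
        (NormedSpace.exp ((-(Complex.I * τ)) • H)) *ᵥ (Pi.single a 1 : Fin n → ℂ)
          = α • (Pi.single a 1 : Fin n → ℂ))
      ↔
    (∀ r s h l : ι,
        E r *ᵥ (Pi.single a 1 : Fin n → ℂ) ≠ 0 →
        E s *ᵥ (Pi.single a 1 : Fin n → ℂ) ≠ 0 →
        E h *ᵥ (Pi.single a 1 : Fin n → ℂ) ≠ 0 →
        E l *ᵥ (Pi.single a 1 : Fin n → ℂ) ≠ 0 →
        θ h ≠ θ l →
        ∃ p : ℚ, θ r - θ s = p * (θ h - θ l)) := by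
  classical
  set e : Fin n → ℂ := Pi.single a 1 with he_def
  -- basic spectral facts
  have hHE : ∀ r, H * E r = (θ r : ℂ) • E r := by
    intro r
    rw [hdecomp, Finset.sum_mul]
    rw [Finset.sum_eq_single r]
    · rw [smul_mul_assoc, hidem]
    · intro s _ hs
      rw [smul_mul_assoc, horth s r hs, smul_zero]
    · intro h; exact absurd (Finset.mem_univ r) h
  have heig : ∀ (c : ℂ) (r : ι), (c • H) *ᵥ (E r *ᵥ e) = (c * (θ r : ℂ)) • (E r *ᵥ e) := by
    intro c r
    rw [Matrix.smul_mulVec, Matrix.mulVec_mulVec, hHE, Matrix.smul_mulVec,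
      smul_smul]
  have he_sum : ∑ r, E r *ᵥ e = e := by
    rw [← sum_mulVec', hone, Matrix.one_mulVec]
  have hexp : ∀ c : ℂ, exp (c • H) *ᵥ e = ∑ r, Complex.exp (c * (θ r : ℂ)) • (E r *ᵥ e) := by
    intro c
    conv_lhs => rw [← he_sum]
    have hms := map_sum (Matrix.mulVecLin (exp (c • H))) (fun r => E r *ᵥ e) Finset.univ
    simp only [Matrix.mulVecLin_apply] at hms
    rw [hms]
    exact Finset.sum_congr rfl fun r _ => exp_mulVec_eigen _ _ _ (heig c r)
  have habs : ∀ (τ x : ℝ), ‖Complex.exp (-(Complex.I*τ) * x)‖ = 1 := by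
    intro τ x
    rw [Complex.norm_exp]
    have : (-(Complex.I*τ) * (x:ℂ)).re = 0 := by simp [Complex.mul_re]
    rw [this, Real.exp_zero]
  -- the projected equality
  have key : ∀ (τ : ℝ) (α : ℂ),
      exp ((-(Complex.I * τ)) • H) *ᵥ e = α • e →
      ∀ s, E s *ᵥ e ≠ 0 → Complex.exp (-(Complex.I * τ) * (θ s : ℂ)) = α := by
    intro τ α heq s hs
    have h1 : E s *ᵥ (exp ((-(Complex.I * τ)) • H) *ᵥ e) = E s *ᵥ (α • e) := by rw [heq]
    rw [hexp] at h1
    have hms := map_sum (Matrix.mulVecLin (E s))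
      (fun r => Complex.exp (-(Complex.I * τ) * (θ r : ℂ)) • (E r *ᵥ e)) Finset.univ
    simp only [Matrix.mulVecLin_apply] at hms
    rw [hms] at h1
    simp only [Matrix.mulVec_smul, Matrix.mulVec_mulVec] at h1
    rw [Finset.sum_eq_single s] at h1
    · rw [hidem] at h1
      have h2 : (Complex.exp (-(Complex.I * τ) * (θ s : ℂ)) - α) • (E s *ᵥ e) = 0 := by
        rw [sub_smul, h1, sub_self]
      rcases smul_eq_zero.mp h2 with h3 | h3
      · exact sub_eq_zero.mp h3
      · exact absurd h3 hs
    · intro r _ hrs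
      rw [horth s r (Ne.symm hrs), Matrix.zero_mulVec, smul_zero]
    · intro h; exact absurd (Finset.mem_univ s) h
  constructor
  · -- forward
    rintro ⟨τ, hτ, α, hα, heq⟩ r s h l hr hs hh hl hne
    have pair : ∀ x y : ι, E x *ᵥ e ≠ 0 → E y *ᵥ e ≠ 0 →
        ∃ M : ℤ, τ * (θ y - θ x) = 2 * Real.pi * M := by
      intro x y hx hy
      have hxy : Complex.exp (-(Complex.I * τ) * (θ x : ℂ))
          = Complex.exp (-(Complex.I * τ) * (θ y : ℂ)) := by
        rw [key τ α heq x hx, key τ α heq y hy]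
      obtain ⟨m, hm⟩ := Complex.exp_eq_exp_iff_exists_int.mp hxy
      exact ⟨m, (aux_im τ (θ x) (θ y) m).mp hm⟩
    obtain ⟨m, hm⟩ := pair s r hs hr
    obtain ⟨k, hk⟩ := pair l h hl hh
    have hπ : (0:ℝ) < Real.pi := Real.pi_pos
    have hτ0 : τ ≠ 0 := ne_of_gt hτ
    have hk0 : (k:ℝ) ≠ 0 := by
      intro h0
      rw [h0, mul_zero] at hk
      have : θ h = θ l := by
        have := mul_eq_zero.mp hk
        rcases this with h1 | h1
        · exact absurd h1 hτ0
        · linarith [sub_eq_zero.mp h1]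
      exact hne this
    have hkz : (k:ℤ) ≠ 0 := by exact_mod_cast fun h0 => hk0 (by exact_mod_cast congrArg (Int.cast : ℤ → ℝ) h0)
    refine ⟨(m : ℚ) / (k : ℚ), ?_⟩
    have h1 : θ r - θ s = 2 * Real.pi * m / τ := by field_simp; linarith
    have h2 : θ h - θ l = 2 * Real.pi * k / τ := by field_simp; linarith
    rw [h1, h2]
    push_cast
    field_simp
  · -- reverse
    intro Hrat
    have he0 : e ≠ 0 := by
      intro h0
      have := congrFun h0 a
      simp [he_def] at this
    obtain ⟨r0, hr0⟩ : ∃ r0, E r0 *ᵥ e ≠ 0 := by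
      by_contra hcon
      push_neg at hcon
      apply he0
      rw [← he_sum]
      exact Finset.sum_eq_zero fun r _ => hcon r
    by_cases hcase : ∀ r, E r *ᵥ e ≠ 0 → θ r = θ r0
    · -- all supported eigenvalues equal
      refine ⟨1, one_pos, Complex.exp (-(Complex.I * (1:ℝ)) * (θ r0 : ℂ)), habs 1 (θ r0), ?_⟩
      rw [hexp]
      conv_rhs => rw [← he_sum, Finset.smul_sum]
      refine Finset.sum_congr rfl fun r _ => ?_
      by_cases hr : E r *ᵥ e = 0
      · rw [hr, smul_zero, smul_zero]
      · rw [hcase r hr]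
    · push_neg at hcase
      obtain ⟨h0, hh0, hθh0⟩ := hcase
      have hne0 : θ h0 ≠ θ r0 := hθh0
      -- choose rationals
      have hpex : ∀ r, ∃ p : ℚ, E r *ᵥ e ≠ 0 → θ r - θ r0 = p * (θ h0 - θ r0) := by
        intro r
        by_cases hr : E r *ᵥ e ≠ 0
        · obtain ⟨p, hp⟩ := Hrat r r0 h0 r0 hr hr0 hh0 hr0 hne0
          exact ⟨p, fun _ => hp⟩
        · exact ⟨0, fun h => absurd h hr⟩
      choose p hp using hpex
      set N : ℕ := ∏ r, (p r).den with hN_def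
      have hNpos : 0 < N := Finset.prod_pos fun r _ => (p r).pos
      have hNr : (0:ℝ) < N := by exact_mod_cast hNpos
      set d : ℝ := θ h0 - θ r0 with hd_def
      have hd : d ≠ 0 := sub_ne_zero.mpr hne0
      have hdabs : (0:ℝ) < |d| := abs_pos.mpr hd
      have hπ : (0:ℝ) < Real.pi := Real.pi_pos
      set τ : ℝ := 2 * Real.pi * N / |d| with hτ_def
      have hτ : 0 < τ := by positivity
      have hint : ∀ r, ∃ z : ℤ, ((p r : ℚ) * N : ℚ) = z := by
        intro r
        exact aux_den_dvd (p r) N (Finset.dvd_prod_of_mem _ (Finset.mem_univ r))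
      have key2 : ∀ r, E r *ᵥ e ≠ 0 → ∃ M : ℤ, τ * (θ r0 - θ r) = 2 * Real.pi * M := by
        intro r hr
        obtain ⟨z, hz⟩ := hint r
        have hzr : (p r : ℝ) * N = z := by exact_mod_cast congrArg (Rat.cast : ℚ → ℝ) hz
        have hpr : θ r - θ r0 = (p r : ℝ) * d := hp r hr
        have h1 : θ r0 - θ r = -((p r : ℝ) * d) := by linarith [hp r hr]
        rcases abs_choice d with habs' | habs'
        · refine ⟨-z, ?_⟩
          rw [hτ_def, habs', h1]
          push_cast
          rw [← hzr]
          field_simp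
        · refine ⟨z, ?_⟩
          rw [hτ_def, habs', h1]
          push_cast
          rw [← hzr]
          field_simp
      refine ⟨τ, hτ, Complex.exp (-(Complex.I * τ) * (θ r0 : ℂ)), habs τ (θ r0), ?_⟩
      rw [hexp]
      conv_rhs => rw [← he_sum, Finset.smul_sum]
      refine Finset.sum_congr rfl fun r _ => ?_
      by_cases hr : E r *ᵥ e = 0
      · rw [hr, smul_zero, smul_zero]
      · obtain ⟨M, hM⟩ := key2 r hr
        congr 1
        exact Complex.exp_eq_exp_iff_exists_int.mpr ⟨M, (aux_im τ (θ r) (θ r0) M).mpr hM⟩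
end

section
/- Let H be a Hermitian matrix with algebraic entries, and suppose perfect state transfer occurs from a to b with phase factor α. If there exist integers k_r (indexed by the eigenvalues in the support Φ_a of a) with Σ_r k_r θ_r = 0 and Σ_r k_r ≠ 0, then α is algebraic. -/
open Matrix
open scoped Classical

private theorem algMul {x y : ℂ} (hx : IsAlgebraic ℚ x) (hy : IsAlgebraic ℚ y) :
    IsAlgebraic ℚ (x * y) :=
  isAlgebraic_iff_isIntegral.mpr
    ((isAlgebraic_iff_isIntegral.mp hx).mul (isAlgebraic_iff_isIntegral.mp hy))

private theorem algAdd {x y : ℂ} (hx : IsAlgebraic ℚ x) (hy : IsAlgebraic ℚ y) :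
    IsAlgebraic ℚ (x + y) :=
  isAlgebraic_iff_isIntegral.mpr
    ((isAlgebraic_iff_isIntegral.mp hx).add (isAlgebraic_iff_isIntegral.mp hy))

private theorem algNeg {x : ℂ} (hx : IsAlgebraic ℚ x) : IsAlgebraic ℚ (-x) :=
  isAlgebraic_iff_isIntegral.mpr (isAlgebraic_iff_isIntegral.mp hx).neg

private theorem algSub {x y : ℂ} (hx : IsAlgebraic ℚ x) (hy : IsAlgebraic ℚ y) :
    IsAlgebraic ℚ (x - y) := by
  rw [sub_eq_add_neg]; exact algAdd hx (algNeg hy)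

private theorem algZpow {x : ℂ} (hx : IsAlgebraic ℚ x) (m : ℤ) : IsAlgebraic ℚ (x ^ m) := by
  have hpow : ∀ l : ℕ, IsAlgebraic ℚ (x ^ l) := fun l =>
    isAlgebraic_iff_isIntegral.mpr ((isAlgebraic_iff_isIntegral.mp hx).pow l)
  cases m with
  | ofNat l => simpa using hpow l
  | negSucc l => rw [zpow_negSucc]; exact (hpow (l + 1)).inv

private theorem algSum {ρ : Type*} (B : Finset ρ) (g : ρ → ℂ)
    (h : ∀ r ∈ B, IsAlgebraic ℚ (g r)) : IsAlgebraic ℚ (∑ r ∈ B, g r) := by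
  classical
  induction B using Finset.induction with
  | empty =>
    rw [Finset.sum_empty]
    exact isAlgebraic_iff_isIntegral.mpr isIntegral_zero
  | @insert s B hs ih =>
    rw [Finset.sum_insert hs]
    exact algAdd (h s (Finset.mem_insert_self s B))
      (ih fun r hr => h r (Finset.mem_insert_of_mem hr))

private theorem algProd {ρ : Type*} (B : Finset ρ) (g : ρ → ℂ)
    (h : ∀ r ∈ B, IsAlgebraic ℚ (g r)) : IsAlgebraic ℚ (∏ r ∈ B, g r) := by
  classical
  induction B using Finset.induction with
  | empty => simpa using isAlgebraic_one
  | @insert s B hs ih =>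
    rw [Finset.prod_insert hs]
    exact algMul (h s (Finset.mem_insert_self s B))
      (ih fun r hr => h r (Finset.mem_insert_of_mem hr))

private theorem algProdL (l : List ℂ) (h : ∀ x ∈ l, IsAlgebraic ℚ x) :
    IsAlgebraic ℚ l.prod := by
  induction l with
  | nil => simpa using isAlgebraic_one
  | cons x l ih =>
    rw [List.prod_cons]
    exact algMul (h x (List.mem_cons_self (a := x) (l := l))) (ih fun y hy => h y (List.mem_cons_of_mem x hy))

private theorem exp_mulVec_eig {n : ℕ} (M : Matrix (Fin n) (Fin n) ℂ) (v : Fin n → ℂ) (c : ℂ)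
    (h : M *ᵥ v = c • v) :
    (NormedSpace.exp M) *ᵥ v = Complex.exp c • v := by
  letI : SeminormedRing (Matrix (Fin n) (Fin n) ℂ) := Matrix.linftyOpSemiNormedRing
  letI : NormedRing (Matrix (Fin n) (Fin n) ℂ) := Matrix.linftyOpNormedRing
  letI : NormedAlgebra ℂ (Matrix (Fin n) (Fin n) ℂ) := Matrix.linftyOpNormedAlgebra
  have hpow : ∀ m : ℕ, (M ^ m) *ᵥ v = (c ^ m) • v := by
    intro m
    induction m with
    | zero => simp [Matrix.one_mulVec]
    | succ m ih =>
      rw [pow_succ, pow_succ, ← Matrix.mulVec_mulVec, h, Matrix.mulVec_smul, ih, smul_smul,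
        mul_comm]
  let L : Matrix (Fin n) (Fin n) ℂ →ₗ[ℂ] (Fin n → ℂ) :=
    { toFun := fun A => A *ᵥ v
      map_add' := fun A B => Matrix.add_mulVec A B v
      map_smul' := fun r A => Matrix.smul_mulVec r A v }
  let L' : Matrix (Fin n) (Fin n) ℂ →L[ℂ] (Fin n → ℂ) := LinearMap.toContinuousLinearMap L
  have hL' : ∀ A, L' A = A *ᵥ v := fun A => rfl
  have hsummable : Summable fun m : ℕ => ((m.factorial : ℂ)⁻¹) • M ^ m :=
    NormedSpace.expSeries_summable' (𝕂 := ℂ) M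
  calc (NormedSpace.exp M) *ᵥ v = L' (∑' m : ℕ, ((m.factorial : ℂ)⁻¹) • M ^ m) := by
        rw [NormedSpace.exp_eq_tsum (𝕂 := ℂ)]; exact (hL' _).symm
    _ = ∑' m : ℕ, L' (((m.factorial : ℂ)⁻¹) • M ^ m) := L'.map_tsum hsummable
    _ = ∑' m : ℕ, (((m.factorial : ℂ)⁻¹) * c ^ m) • v := by
        congr 1; funext m; rw [hL', Matrix.smul_mulVec, hpow, smul_smul]
    _ = (∑' m : ℕ, ((m.factorial : ℂ)⁻¹) * c ^ m) • v := by
        refine Summable.tsum_smul_const ?_ v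
        simpa [smul_eq_mul] using NormedSpace.expSeries_summable' (𝕂 := ℂ) c
    _ = Complex.exp c • v := by
        rw [Complex.exp_eq_exp_ℂ, NormedSpace.exp_eq_tsum (𝕂 := ℂ)]
        simp [smul_eq_mul]

private theorem eig_algebraic {n : ℕ} (H : Matrix (Fin n) (Fin n) ℂ)
    (halg : ∀ i j, IsAlgebraic ℚ (H i j)) (t : ℂ) (u : Fin n → ℂ) (hu : u ≠ 0)
    (h : H *ᵥ u = t • u) : IsAlgebraic ℚ t := by
  classical
  have hdet : ((t • (1 : Matrix (Fin n) (Fin n) ℂ)) - H).det = 0 := by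
    rw [← Matrix.exists_mulVec_eq_zero_iff]
    refine ⟨u, hu, ?_⟩
    rw [Matrix.sub_mulVec, Matrix.smul_mulVec, Matrix.one_mulVec, h, sub_self]
  set A := integralClosure ℚ ℂ with hA
  have hmem : ∀ i j, H i j ∈ A := fun i j => isAlgebraic_iff_isIntegral.mp (halg i j)
  let H₀ : Matrix (Fin n) (Fin n) A := fun i j => ⟨H i j, hmem i j⟩
  have hmap : H₀.map (algebraMap A ℂ) = H := by ext i j; rfl
  have hint : IsIntegral A t := by
    refine ⟨Matrix.charpoly H₀, Matrix.charpoly_monic _, ?_⟩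
    have h1 : Polynomial.eval₂ (algebraMap A ℂ) t (Matrix.charpoly H₀)
        = Polynomial.eval t (Matrix.charpoly H) := by
      rw [← hmap, Matrix.charpoly_map, Polynomial.eval_map]
    rw [h1]
    have h2 : Polynomial.eval t (Matrix.charpoly H)
        = ((Matrix.charmatrix H).map (Polynomial.evalRingHom t)).det := by
      rw [Matrix.charpoly]
      exact RingHom.map_det (Polynomial.evalRingHom t) _
    rw [h2, ← hdet]
    congr 1
    ext i j
    by_cases hij : i = j <;>
      simp [hij, Matrix.charmatrix_apply, Matrix.one_apply, Matrix.diagonal_apply]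
  have : IsIntegral ℚ t := isIntegral_trans t hint
  exact isAlgebraic_iff_isIntegral.mpr this

private theorem sum_mulVec'_s11 {n : ℕ} {ρ : Type*} (B : Finset ρ)
    (M : ρ → Matrix (Fin n) (Fin n) ℂ) (x : Fin n → ℂ) :
    (∑ r ∈ B, M r) *ᵥ x = ∑ r ∈ B, (M r *ᵥ x) := by
  classical
  induction B using Finset.induction with
  | empty => simp [Matrix.zero_mulVec]
  | @insert s B hs ih => rw [Finset.sum_insert hs, Finset.sum_insert hs, Matrix.add_mulVec, ih]

private theorem mulVec_sum' {n : ℕ} {ρ : Type*} (B : Finset ρ)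
    (M : Matrix (Fin n) (Fin n) ℂ) (x : ρ → Fin n → ℂ) :
    M *ᵥ (∑ r ∈ B, x r) = ∑ r ∈ B, (M *ᵥ x r) := by
  classical
  induction B using Finset.induction with
  | empty => simp [Matrix.mulVec_zero]
  | @insert s B hs ih => rw [Finset.sum_insert hs, Finset.sum_insert hs, Matrix.mulVec_add, ih]

/-- For a Hermitian matrix `H` with algebraic entries and spectral decomposition
`H = Σ_r θ_r E_r`, if perfect state transfer occurs from `a` to `b` with phase
factor `α`, and there are integers `k_r` indexed by the eigenvalue support of `a`
with `Σ k_r θ_r = 0` and `Σ k_r ≠ 0`, then `α` is algebraic. -/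
theorem stmt11 {n : ℕ} (H : Matrix (Fin n) (Fin n) ℂ) (hH : H.IsHermitian)
    (halg : ∀ i j, IsAlgebraic ℚ (H i j))
    {ι : Type} [Fintype ι] (θ : ι → ℝ) (E : ι → Matrix (Fin n) (Fin n) ℂ)
    (hθ : Function.Injective θ)
    (hdecomp : H = ∑ r, (θ r : ℂ) • E r)
    (hone : ∑ r, E r = 1)
    (hherm : ∀ r, (E r)ᴴ = E r)
    (hidem : ∀ r, E r * E r = E r)
    (horth : ∀ r s, r ≠ s → E r * E s = 0)
    (a b : Fin n) (τ : ℝ) (α : ℂ) (hα : ‖α‖ = 1)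
    (hpst : (NormedSpace.exp ((-(Complex.I * τ)) • H)) *ᵥ (Pi.single a 1 : Fin n → ℂ)
      = α • (Pi.single b 1 : Fin n → ℂ))
    (k : ι → ℤ)
    (hsum0 : ∑ r ∈ Finset.univ.filter
        (fun r => E r *ᵥ (Pi.single a 1 : Fin n → ℂ) ≠ 0), (k r : ℝ) * θ r = 0)
    (hsumne : ∑ r ∈ Finset.univ.filter
        (fun r => E r *ᵥ (Pi.single a 1 : Fin n → ℂ) ≠ 0), k r ≠ 0) :
    IsAlgebraic ℚ α := by
  classical
  set ea : Fin n → ℂ := Pi.single a 1 with hea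
  set eb : Fin n → ℂ := Pi.single b 1 with heb
  set v : ι → (Fin n → ℂ) := fun r => E r *ᵥ ea with hv
  set S : Finset ι := Finset.univ.filter (fun r => E r *ᵥ ea ≠ 0) with hS
  set S' : Finset ι := Finset.univ.filter (fun r => E r ≠ 0) with hS'
  have hSS' : S ⊆ S' := by
    intro s hs
    rw [hS, Finset.mem_filter] at hs
    rw [hS', Finset.mem_filter]
    refine ⟨Finset.mem_univ s, fun h0 => hs.2 ?_⟩
    rw [h0, Matrix.zero_mulVec]
  -- H * E s = θ s • E s
  have hHE : ∀ s, H * E s = (θ s : ℂ) • E s := by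
    intro s
    rw [hdecomp, Finset.sum_mul]
    rw [Finset.sum_eq_single s]
    · rw [smul_mul_assoc, hidem s]
    · intro r _ hrs
      rw [smul_mul_assoc, horth r s hrs, smul_zero]
    · intro h; exact absurd (Finset.mem_univ s) h
  -- eigenvalues on the support are algebraic
  have hθalg : ∀ s ∈ S', IsAlgebraic ℚ (θ s : ℂ) := by
    intro s hs
    have hEs : E s ≠ 0 := by
      rw [hS', Finset.mem_filter] at hs; exact hs.2
    obtain ⟨i0, j0, hij⟩ : ∃ i j, E s i j ≠ 0 := by
      by_contra hc
      push_neg at hc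
      exact hEs (by ext i j; simpa using hc i j)
    refine eig_algebraic H halg _ (E s *ᵥ Pi.single j0 1) ?_ ?_
    · intro h0
      apply hij
      have := congrFun h0 i0
      simpa [Matrix.mulVec_single] using this
    · rw [Matrix.mulVec_mulVec, hHE s, Matrix.smul_mulVec]
  -- the "diagonal algebra" map
  set f : (ι → ℂ) → Matrix (Fin n) (Fin n) ℂ := fun c => ∑ t ∈ S', c t • E t with hf
  have hsum1 : ∑ t ∈ S', E t = 1 := by
    rw [hS', ← hone]
    exact Finset.sum_filter_ne_zero _
  have hf1 : f (fun _ => 1) = 1 := by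
    rw [hf]; simpa using hsum1
  have hfmul : ∀ c d, f c * f d = f (fun t => c t * d t) := by
    intro c d
    rw [hf]
    rw [Finset.sum_mul_sum]
    refine Finset.sum_congr rfl fun t ht => ?_
    rw [Finset.sum_eq_single_of_mem t ht]
    · rw [smul_mul_smul_comm, hidem t]
    · intro u hu hut
      rw [smul_mul_smul_comm, horth t u (Ne.symm hut), smul_zero]
  have hfH : ∀ r : ι, H - (θ r : ℂ) • 1 = f (fun t => (θ t : ℂ) - θ r) := by
    intro r
    have hH' : H = f (fun t => (θ t : ℂ)) := by
      rw [hdecomp, hf]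
      symm
      apply Finset.sum_subset (Finset.subset_univ _)
      intro t _ ht
      rw [hS', Finset.mem_filter, not_and] at ht
      have : E t = 0 := by
        by_contra h0; exact (ht (Finset.mem_univ t)) h0
      rw [this, smul_zero]
    calc H - (θ r : ℂ) • 1 = f (fun t => (θ t : ℂ)) - (θ r : ℂ) • f (fun _ => 1) := by
          rw [← hH', hf1]
      _ = f (fun t => (θ t : ℂ) - θ r) := by
          rw [hf]
          rw [Finset.smul_sum, ← Finset.sum_sub_distrib]
          refine Finset.sum_congr rfl fun t _ => ?_
          rw [smul_smul, mul_one, ← sub_smul]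
  have hfprod : ∀ (l : List ι) (g : ι → ι → ℂ),
      (l.map (fun r => f (g r))).prod = f (fun t => (l.map (fun r => g r t)).prod) := by
    intro l g
    induction l with
    | nil => simpa using hf1.symm
    | cons r l ih =>
      rw [List.map_cons, List.prod_cons, ih, hfmul]
      congr 1
  -- entries of the idempotents on the support are algebraic
  have hEalg : ∀ s ∈ S', ∀ i j, IsAlgebraic ℚ (E s i j) := by
    intro s hs i j
    set l : List ι := (S'.erase s).toList with hl
    have hlmem : ∀ r, r ∈ l ↔ r ∈ S'.erase s := fun r => Finset.mem_toList
    have hprod : (l.map (fun r => H - (θ r : ℂ) • 1)).prod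
        = (l.map (fun r => (θ s : ℂ) - θ r)).prod • E s := by
      calc (l.map (fun r => H - (θ r : ℂ) • 1)).prod
          = (l.map (fun r => f (fun t => (θ t : ℂ) - θ r))).prod := by
            congr 1
            exact List.map_congr_left fun r _ => hfH r
        _ = f (fun t => (l.map (fun r => (θ t : ℂ) - θ r)).prod) := hfprod _ _
        _ = (l.map (fun r => (θ s : ℂ) - θ r)).prod • E s := by
            simp only [hf]
            rw [Finset.sum_eq_single_of_mem s hs]
            intro t ht hts
            have htmem : t ∈ l := (hlmem t).mpr (Finset.mem_erase.mpr ⟨hts, ht⟩)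
            have hz : (0 : ℂ) ∈ l.map (fun r => (θ t : ℂ) - θ r) := by
              refine List.mem_map.mpr ⟨t, htmem, ?_⟩
              rw [sub_self]
            rw [List.prod_eq_zero hz, zero_smul]
    have hdne : (l.map (fun r => (θ s : ℂ) - θ r)).prod ≠ 0 := by
      apply List.prod_ne_zero
      intro h0
      obtain ⟨r, hr, hr0⟩ := List.mem_map.mp h0
      have hrs : r ≠ s := (Finset.mem_erase.mp ((hlmem r).mp hr)).1
      have hr0' : (θ s : ℂ) = θ r := sub_eq_zero.mp hr0
      exact hrs (hθ (by exact_mod_cast hr0'.symm))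
    have hEeq : E s = ((l.map (fun r => (θ s : ℂ) - θ r)).prod)⁻¹
        • (l.map (fun r => H - (θ r : ℂ) • 1)).prod := by
      rw [hprod, smul_smul, inv_mul_cancel₀ hdne, one_smul]
    rw [hEeq]
    rw [Matrix.smul_apply, smul_eq_mul]
    have hdalg : IsAlgebraic ℚ ((l.map (fun r => (θ s : ℂ) - θ r)).prod)⁻¹ := by
      refine IsAlgebraic.inv (algProdL _ fun x hx => ?_)
      obtain ⟨r, hr, rfl⟩ := List.mem_map.mp hx
      exact algSub (hθalg s hs)
        (hθalg r (Finset.mem_of_mem_erase ((hlmem r).mp hr)))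
    refine algMul hdalg ?_
    have hmatprod : ∀ (l' : List ι), (∀ r ∈ l', r ∈ S'.erase s) → ∀ i j,
        IsAlgebraic ℚ ((l'.map (fun r => H - (θ r : ℂ) • 1)).prod i j) := by
      intro l'
      induction l' with
      | nil =>
        intro _ i j
        rw [List.map_nil, List.prod_nil, Matrix.one_apply]
        split
        · exact isAlgebraic_one
        · exact isAlgebraic_iff_isIntegral.mpr isIntegral_zero
      | cons r l' ih =>
        intro hsub i j
        rw [List.map_cons, List.prod_cons, Matrix.mul_apply]
        refine algSum _ _ fun m _ => ?_
        refine algMul ?_ (ih (fun x hx => hsub x (List.mem_cons_of_mem r hx)) m j)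
        rw [Matrix.sub_apply, Matrix.smul_apply, Matrix.one_apply, smul_eq_mul]
        refine algSub (halg i m) (algMul ?_ ?_)
        · exact hθalg r (Finset.mem_of_mem_erase (hsub r (List.mem_cons_self (a := r) (l := l'))))
        · split
          · exact isAlgebraic_one
          · exact isAlgebraic_iff_isIntegral.mpr isIntegral_zero
    exact hmatprod l (fun r hr => (hlmem r).mp hr) i j
  -- key spectral equation
  have heig : ∀ r, ((-(Complex.I * τ)) • H) *ᵥ v r = ((-(Complex.I * τ)) * θ r) • v r := by
    intro r
    rw [hv]
    rw [Matrix.smul_mulVec, Matrix.mulVec_mulVec, hHE r, Matrix.smul_mulVec,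
      smul_smul]
  have hexp_sum : (NormedSpace.exp ((-(Complex.I * τ)) • H)) *ᵥ ea
      = ∑ r, Complex.exp ((-(Complex.I * τ)) * θ r) • v r := by
    have hea' : ea = ∑ r, v r := by
      rw [hv]
      rw [← sum_mulVec'_s11 Finset.univ E ea, hone, Matrix.one_mulVec]
    conv_lhs => rw [hea']
    rw [mulVec_sum']
    exact Finset.sum_congr rfl fun r _ => exp_mulVec_eig _ _ _ (heig r)
  have hkey : ∀ s, Complex.exp ((-(Complex.I * τ)) * θ s) • v s = α • (E s *ᵥ eb) := by
    intro s
    have hsum : ∑ r, Complex.exp ((-(Complex.I * τ)) * θ r) • v r = α • eb := by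
      rw [← hexp_sum]; exact hpst
    have happly := congrArg (fun x => E s *ᵥ x) hsum
    rw [mulVec_sum'] at happly
    rw [Matrix.mulVec_smul] at happly
    rw [Finset.sum_eq_single s] at happly
    · rw [← happly, Matrix.mulVec_smul, hv, Matrix.mulVec_mulVec, hidem s]
    · intro r _ hrs
      rw [Matrix.mulVec_smul, hv, Matrix.mulVec_mulVec, horth s r (Ne.symm hrs),
        Matrix.zero_mulVec, smul_zero]
    · intro h; exact absurd (Finset.mem_univ s) h
  have hαne : α ≠ 0 := by
    intro h0
    rw [h0] at hα
    simp at hα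
  -- extract scalar equations on the support
  have hwex : ∀ s, ∃ w : ℂ, s ∈ S →
      (Complex.exp ((-(Complex.I * τ)) * θ s) = α * w ∧ IsAlgebraic ℚ w) := by
    intro s
    by_cases hs : s ∈ S
    · have hvs : E s *ᵥ ea ≠ 0 := by
        rw [hS, Finset.mem_filter] at hs; exact hs.2
      obtain ⟨j, hj⟩ : ∃ j, E s j a ≠ 0 := by
        by_contra hc
        push_neg at hc
        apply hvs
        rw [hea, Matrix.mulVec_single]
        funext i
        simp [hc i]
      refine ⟨E s j b / E s j a, fun _ => ⟨?_, ?_⟩⟩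
      · have := congrFun (hkey s) j
        rw [hv, hea, heb] at this
        simp only [Pi.smul_apply, Matrix.mulVec_single, MulOpposite.op_one, one_smul, Matrix.col_apply, mul_one, smul_eq_mul] at this
        rw [← mul_div_assoc, eq_comm, div_eq_iff hj]
        exact this.symm
      · have h1 := hEalg s (hSS' hs) j b
        have h2 := hEalg s (hSS' hs) j a
        rw [div_eq_mul_inv]
        exact algMul h1 h2.inv
    · exact ⟨0, fun h => absurd h hs⟩
  choose w hw using hwex
  -- the product over the support
  have hprod1 : ∏ s ∈ S, Complex.exp ((-(Complex.I * τ)) * θ s) ^ (k s) = 1 := by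
    have h1 : ∀ s, Complex.exp ((-(Complex.I * τ)) * θ s) ^ (k s)
        = Complex.exp ((k s : ℂ) * ((-(Complex.I * τ)) * θ s)) := by
      intro s; rw [Complex.exp_int_mul]
    simp_rw [h1]
    rw [← Complex.exp_sum]
    have h2 : ∑ s ∈ S, (k s : ℂ) * ((-(Complex.I * τ)) * θ s)
        = (-(Complex.I * τ)) * ((∑ s ∈ S, (k s : ℝ) * θ s : ℝ) : ℂ) := by
      push_cast
      rw [Finset.mul_sum]
      refine Finset.sum_congr rfl fun s _ => ?_
      ring
    rw [h2, hsum0]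
    simp
  have hprod2 : ∏ s ∈ S, Complex.exp ((-(Complex.I * τ)) * θ s) ^ (k s)
      = α ^ (∑ s ∈ S, k s) * ∏ s ∈ S, w s ^ (k s) := by
    have h1 : ∀ s ∈ S, Complex.exp ((-(Complex.I * τ)) * θ s) ^ (k s)
        = α ^ (k s) * w s ^ (k s) := by
      intro s hs
      rw [(hw s hs).1, mul_zpow]
    rw [Finset.prod_congr rfl h1, Finset.prod_mul_distrib]
    congr 1
    -- ∏ α ^ k s = α ^ ∑ k s
    induction S using Finset.induction with
    | empty => simp
    | @insert s B hs ih =>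
      rw [Finset.prod_insert hs, Finset.sum_insert hs, zpow_add₀ hαne, ih]
  have hWalg : IsAlgebraic ℚ (∏ s ∈ S, w s ^ (k s)) :=
    algProd _ _ fun s hs => algZpow (hw s hs).2 (k s)
  set K : ℤ := ∑ s ∈ S, k s with hK
  have hαK : α ^ K = (∏ s ∈ S, w s ^ (k s))⁻¹ := by
    have h3 : α ^ K * (∏ s ∈ S, w s ^ (k s)) = 1 := by
      rw [← hprod2]; exact hprod1
    exact eq_inv_of_mul_eq_one_left h3
  have hαKalg : IsAlgebraic ℚ (α ^ K) := by
    rw [hαK]; exact hWalg.inv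
  have hKne : K ≠ 0 := hsumne
  have hmpos : 0 < K.natAbs := Int.natAbs_pos.mpr hKne
  have hαm : IsAlgebraic ℚ (α ^ (K.natAbs)) := by
    rcases Int.natAbs_eq K with hcase | hcase
    · have h4 : α ^ K = α ^ (K.natAbs) := by
        conv_lhs => rw [hcase]
        rw [zpow_natCast]
      rwa [h4] at hαKalg
    · have h4 : α ^ K = (α ^ (K.natAbs))⁻¹ := by
        conv_lhs => rw [hcase]
        rw [_root_.zpow_neg, zpow_natCast]
      rw [h4] at hαKalg
      simpa using hαKalg.inv
  exact isAlgebraic_iff_isIntegral.mpr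
    (IsIntegral.of_pow hmpos (isAlgebraic_iff_isIntegral.mp hαm))
end

section
/- Let H be a Hermitian matrix with algebraic entries and zero diagonal, and suppose vertex a has full eigenvalue support (E_r e_a ≠ 0 for every spectral projection E_r). If perfect state transfer occurs from a to b with phase factor α, then α is algebraic. -/
open Matrix Polynomial

noncomputable section

namespace Stmt12Aux

abbrev A : Subalgebra ℚ ℂ := integralClosure ℚ ℂ

lemma mem_A_iff {x : ℂ} : x ∈ A ↔ IsAlgebraic ℚ x := by
  rw [mem_integralClosure_iff, ← isAlgebraic_iff_isIntegral]

lemma isAlgebraic_of_monic_root (p : Polynomial A) (hp : p.Monic) (x : ℂ)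
    (hx : Polynomial.aeval x p = 0) : IsAlgebraic ℚ x := by
  have h1 : IsIntegral A x := ⟨p, hp, by rwa [Polynomial.aeval_def] at hx⟩
  have h2 : IsIntegral ℚ x := isIntegral_trans x h1
  exact h2.isAlgebraic

open NormedSpace in
lemma mul_exp_eq {m : ℕ} (B M : Matrix (Fin m) (Fin m) ℂ) (c : ℂ)
    (h : B * M = c • B) :
    B * NormedSpace.exp M = Complex.exp c • B := by
  letI : SeminormedRing (Matrix (Fin m) (Fin m) ℂ) := Matrix.linftyOpSemiNormedRing
  letI : NormedRing (Matrix (Fin m) (Fin m) ℂ) := Matrix.linftyOpNormedRing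
  letI : NormedAlgebra ℂ (Matrix (Fin m) (Fin m) ℂ) := Matrix.linftyOpNormedAlgebra
  have hpow : ∀ k : ℕ, B * M ^ k = c ^ k • B := by
    intro k
    induction k with
    | zero => simp
    | succ k ih =>
      rw [pow_succ, ← mul_assoc, ih, smul_mul_assoc, h, smul_smul, ← pow_succ]
  rw [exp_eq_tsum ℂ]
  beta_reduce
  erw [← (expSeries_summable' (𝕂 := ℂ) M).tsum_mul_left B]
  have h2 : ∀ k : ℕ, B * (((k.factorial : ℂ))⁻¹ • M ^ k) = (((k.factorial : ℂ))⁻¹ * c ^ k) • B := by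
    intro k
    rw [mul_smul_comm, hpow, smul_smul]
  simp_rw [h2]
  rw [Summable.tsum_smul_const]
  · congr 1
    have := NormedSpace.exp_eq_tsum (𝕂 := ℂ) (𝔸 := ℂ)
    rw [Complex.exp_eq_exp_ℂ, this]
    simp [smul_eq_mul]
  · simpa [smul_eq_mul] using expSeries_summable' (𝕂 := ℂ) c

end Stmt12Aux

open Stmt12Aux

/-- For a Hermitian matrix `H` with algebraic entries and zero diagonal, with
spectral decomposition `H = Σ_r θ_r E_r`, if vertex `a` has full eigenvalue
support and perfect state transfer occurs from `a` to `b` with phase factor `α`,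
then `α` is algebraic. -/
theorem stmt12 {n : ℕ} (H : Matrix (Fin n) (Fin n) ℂ) (hH : H.IsHermitian)
    (halg : ∀ i j, IsAlgebraic ℚ (H i j))
    (hdiag : ∀ i, H i i = 0)
    {ι : Type} [Fintype ι] (θ : ι → ℝ) (E : ι → Matrix (Fin n) (Fin n) ℂ)
    (hθ : Function.Injective θ)
    (hdecomp : H = ∑ r, (θ r : ℂ) • E r)
    (hone : ∑ r, E r = 1)
    (hherm : ∀ r, (E r)ᴴ = E r)
    (hidem : ∀ r, E r * E r = E r)
    (horth : ∀ r s, r ≠ s → E r * E s = 0)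
    (a b : Fin n)
    (hfull : ∀ r, E r *ᵥ (Pi.single a 1 : Fin n → ℂ) ≠ 0)
    (τ : ℝ) (α : ℂ) (hα : ‖α‖ = 1)
    (hpst : (NormedSpace.exp ((-(Complex.I * τ)) • H)) *ᵥ (Pi.single a 1 : Fin n → ℂ)
      = α • (Pi.single b 1 : Fin n → ℂ)) :
    IsAlgebraic ℚ α := by
  classical
  -- basic products with H
  have hEH : ∀ r, E r * H = (θ r : ℂ) • E r := by
    intro r
    rw [hdecomp, Finset.mul_sum]
    rw [Finset.sum_eq_single r]
    · rw [mul_smul_comm, hidem r]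
    · intro s _ hs
      rw [mul_smul_comm, horth r s (Ne.symm hs), smul_zero]
    · simp
  have hHE : ∀ r, H * E r = (θ r : ℂ) • E r := by
    intro r
    rw [hdecomp, Finset.sum_mul]
    rw [Finset.sum_eq_single r]
    · rw [smul_mul_assoc, hidem r]
    · intro s _ hs
      rw [smul_mul_assoc, horth s r hs, smul_zero]
    · simp
  have hpow : ∀ k : ℕ, H ^ k = ∑ s, ((θ s : ℂ) ^ k) • E s := by
    intro k
    induction k with
    | zero => simpa using hone.symm
    | succ k ih =>
      rw [pow_succ, ih, Finset.sum_mul]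
      refine Finset.sum_congr rfl fun s _ => ?_
      rw [smul_mul_assoc, hEH s, smul_smul, ← pow_succ]
  have haevalH : ∀ q : ℂ[X], aeval H q = ∑ s, (q.eval ((θ s : ℂ))) • E s := by
    intro q
    induction q using Polynomial.induction_on' with
    | add p q hp hq =>
      rw [map_add, hp, hq, ← Finset.sum_add_distrib]
      exact Finset.sum_congr rfl fun s _ => by rw [eval_add, add_smul]
    | monomial k c =>
      rw [aeval_monomial, hpow k, Finset.mul_sum]
      refine Finset.sum_congr rfl fun s _ => ?_
      rw [eval_monomial, Algebra.algebraMap_eq_smul_one, smul_mul_assoc, one_mul, smul_smul]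
  -- eigenvalues are algebraic
  have hθalg : ∀ r, IsAlgebraic ℚ ((θ r : ℂ)) := by
    intro r
    have hv := hfull r
    have hHv : H *ᵥ (E r *ᵥ (Pi.single a 1 : Fin n → ℂ))
        = (θ r : ℂ) • (E r *ᵥ (Pi.single a 1 : Fin n → ℂ)) := by
      rw [mulVec_mulVec, hHE r, smul_mulVec]
    have hdet : (Matrix.scalar (Fin n) ((θ r : ℂ)) - H).det = 0 := by
      rw [← Matrix.exists_mulVec_eq_zero_iff]
      refine ⟨E r *ᵥ (Pi.single a 1 : Fin n → ℂ), hv, ?_⟩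
      rw [sub_mulVec, hHv]
      funext i
      simp only [Pi.sub_apply, Pi.smul_apply, Matrix.mulVec_diagonal, smul_eq_mul,
        Pi.zero_apply, Matrix.scalar_apply, Pi.algebraMap_apply, Algebra.algebraMap_self_apply]
      ring
    have hcp : (Matrix.charpoly H).eval ((θ r : ℂ)) = 0 := by
      rw [Matrix.charpoly, eval_det, matPolyEquiv_charmatrix]
      rw [eval_sub, eval_X, eval_C, hdet]
    set H₀ : Matrix (Fin n) (Fin n) A := fun i j => ⟨H i j, mem_A_iff.mpr (halg i j)⟩ with hH₀
    have hmap : H₀.map (algebraMap A ℂ) = H := by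
      ext i j; rfl
    refine isAlgebraic_of_monic_root H₀.charpoly (H₀.charpoly_monic) _ ?_
    rw [Polynomial.aeval_def, ← Polynomial.eval_map, ← Matrix.charpoly_map, hmap, hcp]
  -- entries of H powers are algebraic
  have hHpow : ∀ (k : ℕ) (i j : Fin n), (H ^ k) i j ∈ A := by
    intro k
    induction k with
    | zero =>
      intro i j
      rw [pow_zero]
      by_cases h : i = j
      · subst h; simp only [Matrix.one_apply_eq]; exact one_mem A
      · rw [Matrix.one_apply_ne h]; exact zero_mem A
    | succ k ih =>
      intro i j
      rw [pow_succ, Matrix.mul_apply]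
      exact Subalgebra.sum_mem A fun l _ =>
        mul_mem (ih i l) (mem_A_iff.mpr (halg l j))
  -- entries of the idempotents are algebraic
  have hEalg : ∀ r i j, IsAlgebraic ℚ (E r i j) := by
    intro r i j
    set v : ι → ℂ := fun s => ((θ s : ℂ)) with hv
    have hvinj : Set.InjOn v (Finset.univ : Finset ι) := by
      intro s _ t _ hst
      exact hθ (Complex.ofReal_inj.mp hst)
    set p : ℂ[X] := Lagrange.basis Finset.univ v r with hp
    have hEr : E r = aeval H p := by
      rw [haevalH p]
      rw [Finset.sum_eq_single r]
      · rw [show ((θ r : ℝ) : ℂ) = v r from rfl,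
          Lagrange.eval_basis_self hvinj (Finset.mem_univ r), one_smul]
      · intro s _ hs
        rw [show ((θ s : ℝ) : ℂ) = v s from rfl,
          Lagrange.eval_basis_of_ne (Ne.symm hs) (Finset.mem_univ s), zero_smul]
      · simp
    have hcoeff : ∀ k, p.coeff k ∈ A := by
      have hmem : p ∈ Polynomial.lifts (algebraMap A ℂ) := by
        rw [hp, Lagrange.basis]
        refine prod_mem fun s hs => ?_
        have hs' : s ≠ r := (Finset.mem_erase.mp hs).1
        have hsub : (v r - v s : ℂ) ∈ A :=
          sub_mem (mem_A_iff.mpr (hθalg r)) (mem_A_iff.mpr (hθalg s))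
        have h1 : ((v r - v s)⁻¹ : ℂ) ∈ A := by
          rw [mem_A_iff]
          exact (mem_A_iff.mp hsub).inv
        have h2 : (-(v s) : ℂ) ∈ A := neg_mem (mem_A_iff.mpr (hθalg s))
        rw [Lagrange.basisDivisor]
        refine mul_mem ?_ ?_
        · exact (Polynomial.C_mem_lifts (algebraMap A ℂ) ⟨_, h1⟩)
        · rw [show (X : ℂ[X]) - C (v s) = X + C (-(v s)) by
            rw [map_neg, sub_eq_add_neg]]
          exact add_mem (Polynomial.X_mem_lifts _)
            (Polynomial.C_mem_lifts (algebraMap A ℂ) ⟨_, h2⟩)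
      intro k
      obtain ⟨c, hc⟩ := (Polynomial.lifts_iff_coeff_lifts p).mp hmem k
      rw [← hc]; exact c.2
    rw [← mem_A_iff, hEr, Polynomial.aeval_eq_sum_range]
    rw [Matrix.sum_apply]
    refine Subalgebra.sum_mem A fun k _ => ?_
    rw [Matrix.smul_apply, smul_eq_mul]
    exact mul_mem (hcoeff k) (hHpow k i j)
  -- traces of the idempotents are natural numbers
  have htrace : ∀ r, ∃ k : ℕ, Matrix.trace (E r) = (k : ℂ) := by
    intro r
    set f : (Fin n → ℂ) →ₗ[ℂ] (Fin n → ℂ) := Matrix.toLin' (E r) with hf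
    have hff : ∀ y, f (f y) = f y := by
      intro y
      have h1 : f ∘ₗ f = f := by
        rw [hf, ← Matrix.toLin'_mul, hidem r]
      exact congrFun (congrArg (fun g => g.toFun) h1) y
    have hproj : LinearMap.IsProj (LinearMap.range f) f := by
      constructor
      · intro x; exact LinearMap.mem_range_self f x
      · rintro x ⟨y, rfl⟩; exact hff y
    refine ⟨Module.finrank ℂ (LinearMap.range f), ?_⟩
    have h2 := hproj.trace
    have h3 : LinearMap.trace ℂ _ f = Matrix.trace (E r) := by
      rw [LinearMap.trace_eq_matrix_trace ℂ (Pi.basisFun ℂ (Fin n)) f]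
      congr 1
      rw [← LinearMap.toMatrix'_toLin' (E r)]
      rfl
    rw [← h3, h2]
  choose k hk using htrace
  -- trace identities
  have hsum_k : (∑ r, (k r : ℂ)) = (n : ℂ) := by
    have h1 := congrArg Matrix.trace hone
    rw [Matrix.trace_sum, Matrix.trace_one] at h1
    simp_rw [hk] at h1
    simpa using h1
  have hsum_kθ : ∑ r, (k r : ℂ) * (θ r : ℂ) = 0 := by
    have h1 : Matrix.trace H = 0 := by
      rw [Matrix.trace]
      simp [Matrix.diag, hdiag]
    have h2 := congrArg Matrix.trace hdecomp
    rw [h1, Matrix.trace_sum] at h2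
    simp_rw [Matrix.trace_smul, hk, smul_eq_mul] at h2
    have h3 : ∑ r, (k r : ℂ) * (θ r : ℂ) = ∑ r, (θ r : ℂ) * (k r : ℂ) :=
      Finset.sum_congr rfl fun r _ => mul_comm _ _
    rw [h3, ← h2]
  -- the key relation from PST
  set c : ℂ := -(Complex.I * τ) with hc
  set lam : ι → ℂ := fun r => Complex.exp (c * (θ r : ℂ)) with hlam
  have hkey : ∀ r, lam r * (E r a a) = α * (E r a b) := by
    intro r
    have hErexp : E r * NormedSpace.exp (c • H) = lam r • E r := by
      refine mul_exp_eq _ _ _ ?_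
      rw [Matrix.mul_smul, hEH r, smul_smul]
    have h1 := congrArg (fun w => (E r *ᵥ w) a) hpst
    simp only [mulVec_mulVec] at h1
    rw [hErexp] at h1
    simp only [Matrix.smul_mulVec, Matrix.mulVec_smul, Pi.smul_apply,
      smul_eq_mul] at h1
    rw [Matrix.mulVec_single, Matrix.mulVec_single] at h1
    simpa using h1
  -- diagonal entries are nonzero
  have hd0 : ∀ r, E r a a ≠ 0 := by
    intro r h
    apply hfull r
    have hsq : E r = (E r)ᴴ * E r := by rw [hherm, hidem]
    have h1 : (0 : ℂ) = ∑ j, ((Complex.normSq (E r j a) : ℝ) : ℂ) := by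
      rw [← h]
      conv_lhs => rw [hsq]
      rw [Matrix.mul_apply]
      refine Finset.sum_congr rfl fun j _ => ?_
      rw [Matrix.conjTranspose_apply]
      simp [Complex.normSq_eq_conj_mul_self]
    have h2 : (0 : ℝ) = ∑ j, Complex.normSq (E r j a) := by
      rw [← Complex.ofReal_sum] at h1
      exact_mod_cast h1
    have h3 : ∀ j, Complex.normSq (E r j a) = 0 := by
      intro j
      have := (Finset.sum_eq_zero_iff_of_nonneg
        (fun j _ => Complex.normSq_nonneg (E r j a))).mp h2.symm
      exact this j (Finset.mem_univ j)
    funext j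
    rw [Matrix.mulVec_single]
    simpa using Complex.normSq_eq_zero.mp (h3 j)
  have hα0 : α ≠ 0 := by
    intro h; rw [h] at hα; simp at hα
  have hlam0 : ∀ r, lam r ≠ 0 := fun r => Complex.exp_ne_zero _
  have he0 : ∀ r, E r a b ≠ 0 := by
    intro r h
    have := hkey r
    rw [h, mul_zero] at this
    exact (mul_ne_zero (hlam0 r) (hd0 r)) this
  -- the product of eigen-phases is 1
  have hprodlam : ∏ r, lam r ^ (k r) = 1 := by
    have h1 : ∀ r, lam r ^ (k r) = Complex.exp ((k r : ℂ) * (c * (θ r : ℂ))) := by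
      intro r
      rw [hlam, Complex.exp_nat_mul]
    simp_rw [h1]
    rw [← Complex.exp_sum]
    have h2 : ∑ r, (k r : ℂ) * (c * (θ r : ℂ)) = c * ∑ r, (k r : ℂ) * (θ r : ℂ) := by
      rw [Finset.mul_sum]
      exact Finset.sum_congr rfl fun r _ => by ring
    rw [h2, hsum_kθ, mul_zero, Complex.exp_zero]
  -- combine
  have hmain : (∏ r, (E r a a) ^ (k r)) = α ^ (∑ r, k r) * ∏ r, (E r a b) ^ (k r) := by
    have h1 : ∏ r, (lam r * (E r a a)) ^ (k r) = ∏ r, (α * (E r a b)) ^ (k r) :=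
      Finset.prod_congr rfl fun r _ => by rw [hkey r]
    simp_rw [mul_pow] at h1
    rw [Finset.prod_mul_distrib, Finset.prod_mul_distrib, hprodlam, one_mul] at h1
    rw [h1, Finset.prod_pow_eq_pow_sum]
  set N : ℕ := ∑ r, k r with hN
  have hNn : N = n := by
    have : ((N : ℂ)) = (n : ℂ) := by
      rw [hN]; push_cast; exact hsum_k
    exact_mod_cast this
  have hN0 : N ≠ 0 := by
    have : 0 < n := Fin.pos a
    omega
  have hprodE_ne : (∏ r, (E r a b) ^ (k r)) ≠ 0 :=
    Finset.prod_ne_zero_iff.mpr fun r _ => pow_ne_zero _ (he0 r)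
  have hαN : α ^ N = (∏ r, (E r a a) ^ (k r)) * (∏ r, (E r a b) ^ (k r))⁻¹ := by
    field_simp
    rw [hmain]
  have hq : α ^ N ∈ A := by
    rw [hαN]
    refine mul_mem ?_ ?_
    · exact Subalgebra.prod_mem A fun r _ => pow_mem (mem_A_iff.mpr (hEalg r a a)) _
    · rw [mem_A_iff]
      refine IsAlgebraic.inv ?_
      rw [← mem_A_iff]
      exact Subalgebra.prod_mem A fun r _ => pow_mem (mem_A_iff.mpr (hEalg r a b)) _
  refine isAlgebraic_of_monic_root (X ^ N - C (⟨α ^ N, hq⟩ : A))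
    (Polynomial.monic_X_pow_sub_C _ hN0) α ?_
  rw [map_sub, map_pow, Polynomial.aeval_X, Polynomial.aeval_C]
  exact sub_eq_zero.mpr rfl

end
end

section
/- If a Hermitian graph admits pretty good state transfer from a to b, then it admits pretty good state transfer from b to a. -/
open Matrix

namespace Stmt13Aux

noncomputable def E {n : ℕ} (H : Matrix (Fin n) (Fin n) ℂ) (t : ℝ) :
    Matrix (Fin n) (Fin n) ℂ :=
  NormedSpace.exp ((-(Complex.I * t)) • H)

lemma E_mul {n : ℕ} (H : Matrix (Fin n) (Fin n) ℂ) (s t : ℝ) :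
    E H s * E H t = E H (s + t) := by
  unfold E
  rw [← Matrix.exp_add_of_commute]
  · congr 1
    rw [← add_smul]
    congr 1
    push_cast
    ring
  · exact ((Commute.refl H).smul_left _).smul_right _

lemma E_zero {n : ℕ} (H : Matrix (Fin n) (Fin n) ℂ) : E H 0 = 1 := by
  unfold E
  simp [NormedSpace.exp_zero]

lemma E_unitary {n : ℕ} (H : Matrix (Fin n) (Fin n) ℂ) (hH : H.IsHermitian) (t : ℝ) :
    (E H t)ᴴ * E H t = 1 := by
  have h1 : (E H t)ᴴ = E H (-t) := by
    unfold E
    rw [← Matrix.exp_conjTranspose]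
    congr 1
    rw [conjTranspose_smul, hH.eq]
    congr 1
    simp [Complex.ext_iff]
  rw [h1, E_mul, neg_add_cancel, E_zero]

lemma E_entry_le {n : ℕ} (H : Matrix (Fin n) (Fin n) ℂ) (hH : H.IsHermitian) (t : ℝ)
    (i j : Fin n) : ‖E H t i j‖ ≤ 1 := by
  have h := congrFun (congrFun (E_unitary H hH t) j) j
  simp only [Matrix.mul_apply, Matrix.conjTranspose_apply, Matrix.one_apply_eq] at h
  have h2 : ∑ k, (Complex.normSq (E H t k j) : ℂ) = 1 := by
    rw [← h]
    refine Finset.sum_congr rfl fun k _ => ?_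
    rw [Complex.normSq_eq_conj_mul_self]
    rfl
  have h3 : ∑ k, Complex.normSq (E H t k j) = 1 := by
    have := congrArg Complex.re h2
    simpa using this
  have h4 : Complex.normSq (E H t i j) ≤ 1 := by
    rw [← h3]
    exact Finset.single_le_sum (f := fun k => Complex.normSq (E H t k j))
      (fun k _ => Complex.normSq_nonneg _) (Finset.mem_univ i)
  have := Complex.sq_norm (E H t i j)
  nlinarith [norm_nonneg (E H t i j)]

lemma mulVec_norm_le {n : ℕ} (M : Matrix (Fin n) (Fin n) ℂ)
    (hM : ∀ i j, ‖M i j‖ ≤ 1) (w : Fin n → ℂ) :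
    ‖M *ᵥ w‖ ≤ n * ‖w‖ := by
  have hw : 0 ≤ (n : ℝ) * ‖w‖ := by positivity
  rw [pi_norm_le_iff_of_nonneg hw]
  intro i
  calc ‖(M *ᵥ w) i‖ = ‖∑ j, M i j * w j‖ := rfl
    _ ≤ ∑ j, ‖M i j * w j‖ := norm_sum_le _ _
    _ ≤ ∑ j : Fin n, 1 * ‖w‖ := by
        refine Finset.sum_le_sum fun j _ => ?_
        rw [norm_mul]
        exact mul_le_mul (hM i j) (norm_le_pi_norm w j) (norm_nonneg _) zero_le_one
    _ = n * ‖w‖ := by simp [Finset.sum_const]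

lemma almost_period {n : ℕ} (H : Matrix (Fin n) (Fin n) ℂ) (hH : H.IsHermitian)
    (c : Fin n) (ε T : ℝ) (hε : 0 < ε) :
    ∃ r : ℝ, T < r ∧ ‖E H r *ᵥ (Pi.single c 1 : Fin n → ℂ) - Pi.single c 1‖ ≤ ε := by
  set v : ℕ → (Fin n → ℂ) := fun m => E H m *ᵥ Pi.single c 1 with hv
  have hbdd : ∀ m, v m ∈ Metric.closedBall (0 : Fin n → ℂ) n := by
    intro m
    simp only [Metric.mem_closedBall, dist_zero_right]
    calc ‖v m‖ ≤ n * ‖(Pi.single c 1 : Fin n → ℂ)‖ :=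
          mulVec_norm_le _ (E_entry_le H hH _) _
      _ ≤ n * 1 := by
          gcongr
          rw [pi_norm_le_iff_of_nonneg zero_le_one]
          intro i
          rcases eq_or_ne i c with rfl | h
          · simp
          · simp [Pi.single_eq_of_ne h]
      _ = n := mul_one _
  obtain ⟨L, _, φ, hφ, hL⟩ := tendsto_subseq_of_bounded Metric.isBounded_closedBall hbdd
  -- find k large with both tails close to L
  have hcauchy := Metric.tendsto_atTop.mp hL
  have hε' : 0 < ε / (2 * (n + 1)) := by positivity
  obtain ⟨N, hN⟩ := hcauchy _ hε'
  -- choose indices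
  obtain ⟨M, hM⟩ := exists_nat_gt (T + φ N)
  set k₂ := max M N with hk₂
  have hNk₂ : N ≤ k₂ := le_max_right _ _
  have hclose : ‖v (φ k₂) - v (φ N)‖ ≤ ε / (n + 1) := by
    have h1 := hN k₂ hNk₂
    have h2 := hN N le_rfl
    simp only [Function.comp_apply] at h1 h2
    calc ‖v (φ k₂) - v (φ N)‖ = dist (v (φ k₂)) (v (φ N)) := (dist_eq_norm _ _).symm
      _ ≤ dist (v (φ k₂)) L + dist L (v (φ N)) := dist_triangle _ _ _
      _ ≤ ε / (2 * (n+1)) + ε / (2 * (n+1)) :=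
          add_le_add h1.le (by rw [dist_comm]; exact h2.le)
      _ = ε / (n + 1) := by
          field_simp
          ring
  -- r = φ k₂ - φ N
  have hmono : φ N ≤ φ k₂ := hφ.monotone hNk₂
  refine ⟨(φ k₂ : ℝ) - (φ N : ℝ), ?_, ?_⟩
  · have h6 : M ≤ φ k₂ := (le_max_left M N).trans hφ.le_apply
    have h7 : (M : ℝ) ≤ (φ k₂ : ℝ) := by exact_mod_cast h6
    linarith
  · have key : E H ((φ k₂ : ℝ) - (φ N : ℝ)) *ᵥ (Pi.single c 1 : Fin n → ℂ) - Pi.single c 1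
        = E H (-(φ N : ℝ)) *ᵥ (v (φ k₂) - v (φ N)) := by
      rw [Matrix.mulVec_sub]
      congr 1
      · rw [hv]
        simp only
        rw [Matrix.mulVec_mulVec, E_mul]
        congr 2
        ring
      · rw [hv]
        simp only
        rw [Matrix.mulVec_mulVec, E_mul]
        rw [show -(φ N : ℝ) + (φ N : ℝ) = 0 by ring, E_zero, Matrix.one_mulVec]
    rw [key]
    calc ‖E H (-(φ N : ℝ)) *ᵥ (v (φ k₂) - v (φ N))‖ ≤ n * ‖v (φ k₂) - v (φ N)‖ :=
          mulVec_norm_le _ (E_entry_le H hH _) _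
      _ ≤ n * (ε / (n + 1)) := by gcongr
      _ ≤ ε := by
          have hn1 : (0:ℝ) < n + 1 := by positivity
          have heq : (n:ℝ) * (ε / (n + 1)) = (n * ε) / (n + 1) := by ring
          rw [heq, div_le_iff₀ hn1]
          nlinarith

end Stmt13Aux

open Stmt13Aux in
/-- If a Hermitian graph admits pretty good state transfer from `a` to `b`, then
it admits pretty good state transfer from `b` to `a`. -/
theorem stmt13 {n : ℕ} (H : Matrix (Fin n) (Fin n) ℂ) (hH : H.IsHermitian)
    (a b : Fin n)
    (hpgst : ∀ ε : ℝ, 0 < ε → ∃ t : ℝ, 0 < t ∧ ∃ γ : ℂ, ‖γ‖ = 1 ∧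
      ‖(NormedSpace.exp ((-(Complex.I * t)) • H)) *ᵥ (Pi.single a 1 : Fin n → ℂ)
        - γ • (Pi.single b 1 : Fin n → ℂ)‖ ≤ ε) :
    ∀ ε : ℝ, 0 < ε → ∃ t : ℝ, 0 < t ∧ ∃ γ : ℂ, ‖γ‖ = 1 ∧
      ‖(NormedSpace.exp ((-(Complex.I * t)) • H)) *ᵥ (Pi.single b 1 : Fin n → ℂ)
        - γ • (Pi.single a 1 : Fin n → ℂ)‖ ≤ ε := by
  intro ε hε
  have hε₁ : (0:ℝ) < ε / (2 * (n + 1)) := by positivity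
  obtain ⟨t₀, ht₀, γ, hγ, h1⟩ := hpgst _ hε₁
  obtain ⟨r, hr, h2⟩ := almost_period H hH a (ε / 2) t₀ (by positivity)
  refine ⟨r - t₀, by linarith, γ⁻¹, by rw [norm_inv, hγ, inv_one], ?_⟩
  have hγ0 : γ ≠ 0 := by
    intro h; rw [h] at hγ; simp at hγ
  -- abbreviations
  set ea : Fin n → ℂ := Pi.single a 1
  set eb : Fin n → ℂ := Pi.single b 1
  have hEdef : ∀ t : ℝ, NormedSpace.exp ((-(Complex.I * t)) • H) = E H t := fun t => rfl
  rw [hEdef]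
  have hsplit : E H (r - t₀) *ᵥ eb - γ⁻¹ • ea
      = E H (r - t₀) *ᵥ (eb - γ⁻¹ • (E H t₀ *ᵥ ea)) + γ⁻¹ • (E H r *ᵥ ea - ea) := by
    rw [Matrix.mulVec_sub, Matrix.mulVec_smul, Matrix.mulVec_mulVec, E_mul,
      show r - t₀ + t₀ = r by ring, smul_sub]
    abel
  rw [hsplit]
  have hb1 : ‖eb - γ⁻¹ • (E H t₀ *ᵥ ea)‖ ≤ ε / (2 * (n + 1)) := by
    have : eb - γ⁻¹ • (E H t₀ *ᵥ ea) = (-γ⁻¹) • (E H t₀ *ᵥ ea - γ • eb) := by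
      rw [neg_smul, smul_sub, smul_smul, inv_mul_cancel₀ hγ0, one_smul]
      abel
    rw [this, norm_smul]
    have : ‖-γ⁻¹‖ = 1 := by
      rw [norm_neg]
      simp [norm_inv]
      exact hγ
    rw [this, one_mul]
    exact h1
  calc ‖E H (r - t₀) *ᵥ (eb - γ⁻¹ • (E H t₀ *ᵥ ea)) + γ⁻¹ • (E H r *ᵥ ea - ea)‖
      ≤ ‖E H (r - t₀) *ᵥ (eb - γ⁻¹ • (E H t₀ *ᵥ ea))‖ + ‖γ⁻¹ • (E H r *ᵥ ea - ea)‖ :=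
        norm_add_le _ _
    _ ≤ n * ‖eb - γ⁻¹ • (E H t₀ *ᵥ ea)‖ + ‖E H r *ᵥ ea - ea‖ := by
        gcongr
        · exact mulVec_norm_le _ (E_entry_le H hH _) _
        · rw [norm_smul]
          have h3 : ‖γ⁻¹‖ = 1 := by
            simp [norm_inv]
            exact hγ
          rw [h3, one_mul]
    _ ≤ n * (ε / (2 * (n + 1))) + ε / 2 := by gcongr
    _ ≤ ε := by
        have hn1 : (0:ℝ) < 2 * (n + 1) := by positivity
        have heq : (n:ℝ) * (ε / (2 * (n + 1))) = (n * ε) / (2 * (n + 1)) := by ring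
        rw [heq]
        have h8 : (n:ℝ) * ε / (2 * (n + 1)) ≤ ε / 2 := by
          rw [div_le_div_iff₀ hn1 two_pos]
          nlinarith
        linarith
end

section
/- Let X be a Hermitian graph on n ≥ 2 vertices with matrix H_X = Σ_r θ_r E_r, and suppose vertices a and b of X are strongly cospectral. Form the rooted product X ∘ S_m: H_Y = E_{11} ⊗ H_X + B ⊗ I_n, where E_{11} is the (m+1)×(m+1) matrix with 1 in the (1,1) entry and B is the adjacency matrix of the star K_{1,m} rooted at its center. Then a and b (identified with the root copies) are strongly cospectral in X ∘ S_m, and the eigenvalue support of a in the rooted product is {(θ_r ± √(θ_r² + 4m))/2 : θ_r ∈ Φ_a}. -/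
open Matrix Kronecker

noncomputable def lamAux (m : ℕ) (θ0 : ℝ) (e : Bool) : ℝ :=
  (θ0 + (if e then 1 else -1) * Real.sqrt (θ0^2 + 4*m))/2

lemma lam_root (m : ℕ) (θ0 : ℝ) (e : Bool) :
    (lamAux m θ0 e)^2 = θ0 * lamAux m θ0 e + m := by
  have h0 : (0:ℝ) ≤ θ0^2 + 4*m := by positivity
  have h := Real.sq_sqrt h0
  cases e <;> simp [lamAux] <;> nlinarith [h]

lemma lam_pos (m : ℕ) (hm : 1 ≤ m) (θ0 : ℝ) : 0 < lamAux m θ0 true := by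
  have h0 : (0:ℝ) ≤ θ0^2 + 4*m := by positivity
  have h := Real.sq_sqrt h0
  have h1 := Real.sqrt_nonneg (θ0^2 + 4*m)
  have hm' : (1:ℝ) ≤ m := by exact_mod_cast hm
  simp [lamAux]
  nlinarith [h, h1, hm']

lemma lam_neg (m : ℕ) (hm : 1 ≤ m) (θ0 : ℝ) : lamAux m θ0 false < 0 := by
  have h0 : (0:ℝ) ≤ θ0^2 + 4*m := by positivity
  have h := Real.sq_sqrt h0
  have h1 := Real.sqrt_nonneg (θ0^2 + 4*m)
  have hm' : (1:ℝ) ≤ m := by exact_mod_cast hm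
  simp [lamAux]
  nlinarith [h, h1, hm']

lemma lam_ne (m : ℕ) (hm : 1 ≤ m) (θ0 : ℝ) (e : Bool) : lamAux m θ0 e ≠ 0 := by
  cases e
  · exact ne_of_lt (lam_neg m hm θ0)
  · exact ne_of_gt (lam_pos m hm θ0)

lemma lam_prod (m : ℕ) (θ0 : ℝ) :
    lamAux m θ0 true * lamAux m θ0 false = -(m:ℝ) := by
  have h0 : (0:ℝ) ≤ θ0^2 + 4*m := by positivity
  have h := Real.sq_sqrt h0
  simp [lamAux]
  nlinarith [h]

noncomputable def vAux (m : ℕ) (l : ℂ) : Fin (m+1) → ℂ := fun i => if i = 0 then l else 1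

noncomputable def MAux (m : ℕ) (l : ℂ) : Matrix (Fin (m+1)) (Fin (m+1)) ℂ :=
  Matrix.vecMulVec (vAux m l) (vAux m l)

noncomputable def BAux (m : ℕ) : Matrix (Fin (m+1)) (Fin (m+1)) ℂ :=
  Matrix.of fun i j => if (i = 0 ∧ j ≠ 0) ∨ (j = 0 ∧ i ≠ 0) then (1 : ℂ) else 0

noncomputable def KAux (m : ℕ) : Matrix (Fin (m+1)) (Fin (m+1)) ℂ :=
  Matrix.of fun i j => if i = 0 ∧ j = 0 then 1 else if i = 0 ∨ j = 0 then 0 else (m:ℂ)⁻¹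

noncomputable def DAux (m : ℕ) : Matrix (Fin (m+1)) (Fin (m+1)) ℂ :=
  Matrix.of fun i j => if i = 0 ∨ j = 0 then 0 else (if i = j then 1 else 0) - (m:ℂ)⁻¹

lemma E11_mul_apply {m : ℕ} (N : Matrix (Fin (m+1)) (Fin (m+1)) ℂ) (i j : Fin (m+1)) :
    ((Matrix.single (0 : Fin (m+1)) 0 (1:ℂ) : Matrix (Fin (m+1)) (Fin (m+1)) ℂ) * N) i j
      = if i = 0 then N 0 j else 0 := by
  rw [Matrix.mul_apply]
  by_cases hi : i = 0
  · subst hi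
    simp [Matrix.single, eq_comm]
  · simp [Matrix.single, Ne.symm hi, hi]

lemma BM_apply {m : ℕ} (l : ℂ) (i j : Fin (m+1)) :
    (BAux m * MAux m l) i j = (if i = 0 then (m:ℂ) else l) * vAux m l j := by
  rw [Matrix.mul_apply]
  by_cases hi : i = 0
  · subst hi
    rw [Fin.sum_univ_succ]
    simp [BAux, MAux, vAux, Fin.succ_ne_zero, Matrix.vecMulVec_apply]
  · rw [Fin.sum_univ_succ]
    simp [BAux, MAux, vAux, Fin.succ_ne_zero, Matrix.vecMulVec_apply, hi]

lemma key1 {m : ℕ} (l θ0 : ℂ) (hroot : l^2 = θ0*l + m) :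
    θ0 • (Matrix.single (0 : Fin (m+1)) 0 (1:ℂ) * MAux m l) + BAux m * MAux m l
      = l • MAux m l := by
  ext i j
  rw [Matrix.add_apply, Matrix.smul_apply, Matrix.smul_apply, E11_mul_apply, BM_apply]
  by_cases hi : i = 0
  · subst hi
    simp only [if_pos rfl, MAux, Matrix.vecMulVec_apply, vAux, smul_eq_mul, if_true]
    linear_combination (-(if j = 0 then l else (1:ℂ))) * hroot
  · simp only [if_neg hi, MAux, Matrix.vecMulVec_apply, vAux, smul_eq_mul]
    ring

lemma E11_mul_D {m : ℕ} : Matrix.single (0 : Fin (m+1)) 0 (1:ℂ) * DAux m = 0 := by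
  ext i j
  rw [E11_mul_apply]
  simp [DAux]

lemma B_mul_D {m : ℕ} (hm : 1 ≤ m) : BAux m * DAux m = 0 := by
  have hm0 : (m:ℂ) ≠ 0 := Nat.cast_ne_zero.mpr (by omega)
  ext i j
  rw [Matrix.mul_apply]
  by_cases hi : i = 0
  · subst hi
    by_cases hj : j = 0
    · subst hj; simp [BAux, DAux]
    · obtain ⟨j', rfl⟩ := Fin.eq_succ_of_ne_zero hj
      have hterm : ∀ k : Fin (m+1), BAux m 0 k * DAux m k j'.succ
          = (if k = 0 then 0 else ((if k = j'.succ then (1:ℂ) else 0) - (m:ℂ)⁻¹)) := by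
        intro k
        by_cases hk : k = 0
        · subst hk; simp [BAux, DAux]
        · simp [BAux, DAux, hk, Fin.succ_ne_zero]
      rw [Finset.sum_congr rfl fun k _ => hterm k, Fin.sum_univ_succ]
      norm_num [Fin.succ_ne_zero, Fin.succ_inj]
      rw [mul_inv_cancel₀ hm0, sub_self]
  · rw [Fin.sum_univ_succ]
    simp [BAux, DAux, Fin.succ_ne_zero, hi]

lemma K_add_D {m : ℕ} : KAux m + DAux m = 1 := by
  ext i j
  rw [Matrix.add_apply, Matrix.one_apply]
  by_cases hi : i = 0
  · by_cases hj : j = 0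
    · simp [KAux, DAux, hi, hj]
    · simp [KAux, DAux, hi, hj, Ne.symm hj]
  · by_cases hj : j = 0
    · simp [KAux, DAux, hi, hj, Ne.symm hi]
    · simp only [KAux, DAux, Matrix.of_apply, hi, hj, and_false, false_and, if_false,
        or_self, or_false, false_or]
      by_cases hij : i = j <;> simp [hij] <;> ring

lemma MK_sum {m : ℕ} (hm : 1 ≤ m) (l1 l2 : ℂ) (hp : l1*l2 = -(m:ℂ))
    (h1 : l1^2 + m ≠ 0) (h2 : l2^2 + m ≠ 0) :
    (l1^2+m)⁻¹ • MAux m l1 + (l2^2+m)⁻¹ • MAux m l2 = KAux m := by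
  have hm0 : (m:ℂ) ≠ 0 := Nat.cast_ne_zero.mpr (by omega)
  ext i j
  simp only [Matrix.add_apply, Matrix.smul_apply, MAux, Matrix.vecMulVec_apply, vAux,
    KAux, Matrix.of_apply, smul_eq_mul]
  by_cases hi : i = 0 <;> by_cases hj : j = 0 <;> simp only [hi, hj, if_true, if_false,
    and_true, and_false, true_and, false_and, true_or, or_true, or_false, false_or,
    if_true, if_false]
  · field_simp
    linear_combination (l1*l2 - (m:ℂ)) * hp
  · field_simp
    linear_combination (l1 + l2) * hp
  · field_simp
    linear_combination (l1 + l2) * hp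
  · field_simp
    linear_combination ((m:ℂ) - l1*l2) * hp
lemma lamAux_true (m : ℕ) (θ0 : ℝ) : lamAux m θ0 true = (θ0 + Real.sqrt (θ0^2 + 4*m))/2 := by
  simp [lamAux]

lemma lamAux_false (m : ℕ) (θ0 : ℝ) : lamAux m θ0 false = (θ0 - Real.sqrt (θ0^2 + 4*m))/2 := by
  simp [lamAux]; ring

lemma HY_mul_G {m n : ℕ} (l θ0 : ℂ) (hroot : l^2 = θ0*l + m)
    (HX Es : Matrix (Fin n) (Fin n) ℂ) (hHXE : HX * Es = θ0 • Es) (cc : ℂ) :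
    ((Matrix.single (0 : Fin (m+1)) 0 (1:ℂ)) ⊗ₖ HX
        + BAux m ⊗ₖ (1 : Matrix (Fin n) (Fin n) ℂ)) * (cc • (MAux m l ⊗ₖ Es))
      = l • (cc • (MAux m l ⊗ₖ Es)) := by
  rw [mul_smul_comm, smul_comm]
  congr 1
  rw [add_mul, ← Matrix.mul_kronecker_mul, ← Matrix.mul_kronecker_mul,
    hHXE, one_mul, Matrix.kronecker_smul, ← Matrix.smul_kronecker,
    ← Matrix.add_kronecker, key1 _ _ hroot, Matrix.smul_kronecker]

lemma HY_mul_G0 {m n : ℕ} (hm : 1 ≤ m) (HX : Matrix (Fin n) (Fin n) ℂ) :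
    ((Matrix.single (0 : Fin (m+1)) 0 (1:ℂ)) ⊗ₖ HX
        + BAux m ⊗ₖ (1 : Matrix (Fin n) (Fin n) ℂ))
      * (DAux m ⊗ₖ (1 : Matrix (Fin n) (Fin n) ℂ)) = 0 := by
  rw [add_mul, ← Matrix.mul_kronecker_mul, ← Matrix.mul_kronecker_mul,
    E11_mul_D, B_mul_D hm, Matrix.zero_kronecker, Matrix.zero_kronecker, add_zero]

lemma MK_sum' {m n : ℕ} (hm : 1 ≤ m) (l1 l2 : ℂ) (hp : l1*l2 = -(m:ℂ))
    (h1 : l1^2 + m ≠ 0) (h2 : l2^2 + m ≠ 0) (Es : Matrix (Fin n) (Fin n) ℂ) :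
    (l1^2+m)⁻¹ • (MAux m l1 ⊗ₖ Es) + (l2^2+m)⁻¹ • (MAux m l2 ⊗ₖ Es)
      = KAux m ⊗ₖ Es := by
  rw [← Matrix.smul_kronecker, ← Matrix.smul_kronecker, ← Matrix.add_kronecker,
    MK_sum hm l1 l2 hp h1 h2]

lemma G_col {m n : ℕ} (l cc : ℂ) (Es : Matrix (Fin n) (Fin n) ℂ) (x : Fin n) :
    (cc • (MAux m l ⊗ₖ Es)) *ᵥ (Pi.single ((0 : Fin (m+1)), x) 1 : Fin (m+1) × Fin n → ℂ)
    = fun p : Fin (m+1) × Fin n =>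
        (cc * (vAux m l p.1 * l)) * ((Es *ᵥ (Pi.single x 1 : Fin n → ℂ)) p.2) := by
  funext p
  rw [Matrix.smul_mulVec]
  simp only [Matrix.mulVec_single, Pi.smul_apply, Matrix.kroneckerMap_apply,
    MAux, Matrix.vecMulVec_apply, smul_eq_mul, mul_one, Matrix.col_apply, MulOpposite.op_one, one_smul]
  have hv0 : vAux m l (0 : Fin (m+1)) = l := by simp [vAux]
  rw [hv0]
  ring

lemma G0_col {m n : ℕ} (x : Fin n) :
    (DAux m ⊗ₖ (1 : Matrix (Fin n) (Fin n) ℂ)) *ᵥ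
      (Pi.single ((0 : Fin (m+1)), x) 1 : Fin (m+1) × Fin n → ℂ) = 0 := by
  funext p
  simp [Matrix.mulVec_single, Matrix.kroneckerMap_apply, DAux]

/-- If `a` and `b` are strongly cospectral in a Hermitian graph `X` on `n ≥ 2`
vertices, then in the rooted product `X ∘ S_m` (star with `m` pendant vertices
rooted at its center, root indexed `0`) the root copies of `a` and `b` are again
strongly cospectral, and the eigenvalue support of `a` there is
`{(θ_r ± √(θ_r² + 4m))/2 : θ_r ∈ Φ_a}`. -/
theorem stmt16 {n m : ℕ} (hn : 2 ≤ n) (hm : 1 ≤ m)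
    (HX : Matrix (Fin n) (Fin n) ℂ) (hHX : HX.IsHermitian)
    {ι : Type} [Fintype ι] (θ : ι → ℝ) (E : ι → Matrix (Fin n) (Fin n) ℂ)
    (hθ : Function.Injective θ)
    (hdecomp : HX = ∑ r, (θ r : ℂ) • E r)
    (hone : ∑ r, E r = 1)
    (hherm : ∀ r, (E r)ᴴ = E r)
    (hidem : ∀ r, E r * E r = E r)
    (horth : ∀ r s, r ≠ s → E r * E s = 0)
    (a b : Fin n)
    (hsc : ∀ r, ∃ q : ℝ, E r *ᵥ (Pi.single a 1 : Fin n → ℂ)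
      = Complex.exp (Complex.I * q) • (E r *ᵥ (Pi.single b 1 : Fin n → ℂ)))
    (B : Matrix (Fin (m + 1)) (Fin (m + 1)) ℂ)
    (hB : B = Matrix.of fun i j =>
      if (i = 0 ∧ j ≠ 0) ∨ (j = 0 ∧ i ≠ 0) then (1 : ℂ) else 0)
    (HY : Matrix (Fin (m + 1) × Fin n) (Fin (m + 1) × Fin n) ℂ)
    (hHY : HY = (Matrix.single 0 0 (1 : ℂ)) ⊗ₖ HX
        + B ⊗ₖ (1 : Matrix (Fin n) (Fin n) ℂ)) :
    ∀ {κ : Type} [Fintype κ] (μ : κ → ℝ) (F : κ → Matrix (Fin (m + 1) × Fin n) (Fin (m + 1) × Fin n) ℂ),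
      Function.Injective μ →
      HY = ∑ r, (μ r : ℂ) • F r →
      (∑ r, F r) = 1 →
      (∀ r, (F r)ᴴ = F r) →
      (∀ r, F r * F r = F r) →
      (∀ r s, r ≠ s → F r * F s = 0) →
      (∀ r, ∃ q : ℝ, F r *ᵥ (Pi.single (0, a) 1 : Fin (m + 1) × Fin n → ℂ)
          = Complex.exp (Complex.I * q) •
            (F r *ᵥ (Pi.single (0, b) 1 : Fin (m + 1) × Fin n → ℂ)))
      ∧ {lam : ℝ | ∃ r, μ r = lam ∧
            F r *ᵥ (Pi.single (0, a) 1 : Fin (m + 1) × Fin n → ℂ) ≠ 0}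
          = {lam : ℝ | ∃ r, E r *ᵥ (Pi.single a 1 : Fin n → ℂ) ≠ 0 ∧
              (lam = (θ r + Real.sqrt ((θ r) ^ 2 + 4 * m)) / 2 ∨
               lam = (θ r - Real.sqrt ((θ r) ^ 2 + 4 * m)) / 2)} := by
  intro κ _inst μ F hμinj hdec' hone' hherm' hidem' horth'
  classical
  have hm0R : (0:ℝ) < (m:ℝ) := by exact_mod_cast Nat.lt_of_lt_of_le Nat.zero_lt_one hm
  have hmC : ((m:ℂ)) ≠ 0 := Nat.cast_ne_zero.mpr (by omega)
  set lam : ι × Bool → ℝ := fun t => lamAux m (θ t.1) t.2 with hlam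
  have hroot : ∀ t, (lam t)^2 = θ t.1 * lam t + m := fun t => lam_root m (θ t.1) t.2
  have hlne : ∀ t, lam t ≠ 0 := fun t => lam_ne m hm (θ t.1) t.2
  have hrootC : ∀ t, ((lam t : ℝ):ℂ)^2 = ((θ t.1 : ℝ):ℂ) * ((lam t : ℝ):ℂ) + (m:ℂ) := by
    intro t; exact_mod_cast hroot t
  have hdenC : ∀ t, ((lam t : ℝ):ℂ)^2 + (m:ℂ) ≠ 0 := by
    intro t
    have h : (0:ℝ) < (lam t)^2 + m := by nlinarith [sq_nonneg (lam t), hm0R]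
    intro hc
    have : ((lam t)^2 + m : ℝ) = 0 := by exact_mod_cast hc
    linarith
  have hlinj : Function.Injective lam := by
    rintro ⟨s, e⟩ ⟨s', e'⟩ h
    have h1 := hroot (s, e)
    have h2 := hroot (s', e')
    rw [h] at h1
    have h3 : θ s * lam (s', e') = θ s' * lam (s', e') := by linarith
    have hθeq : θ s = θ s' := mul_right_cancel₀ (hlne (s', e')) h3
    have hs : s = s' := hθ hθeq
    subst hs
    simp only [Prod.mk.injEq, true_and]
    cases e <;> cases e'
    · rfl
    · exfalso
      have h' : lamAux m (θ s) false = lamAux m (θ s) true := h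
      have hp := lam_pos m hm (θ s)
      have hq := lam_neg m hm (θ s)
      linarith
    · exfalso
      have h' : lamAux m (θ s) true = lamAux m (θ s) false := h
      have hp := lam_pos m hm (θ s)
      have hq := lam_neg m hm (θ s)
      linarith
    · rfl
  set c : ι × Bool → ℂ := fun t => (((lam t : ℝ):ℂ)^2 + (m:ℂ))⁻¹ with hcdef
  set G : ι × Bool → Matrix (Fin (m+1) × Fin n) (Fin (m+1) × Fin n) ℂ :=
    fun t => c t • (MAux m ((lam t : ℝ):ℂ) ⊗ₖ E t.1) with hGdef
  set G0 : Matrix (Fin (m+1) × Fin n) (Fin (m+1) × Fin n) ℂ :=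
    DAux m ⊗ₖ (1 : Matrix (Fin n) (Fin n) ℂ) with hG0def
  have hBB : B = BAux m := by rw [hB]; rfl
  have hHXE : ∀ s, HX * E s = ((θ s : ℝ):ℂ) • E s := by
    intro s
    rw [hdecomp, Finset.sum_mul,
      Finset.sum_eq_single_of_mem s (Finset.mem_univ s)
        (fun t _ hts => by rw [smul_mul_assoc, horth t s hts, smul_zero]),
      smul_mul_assoc, hidem s]
  have hHYG : ∀ t, HY * G t = ((lam t : ℝ):ℂ) • G t := by
    intro t
    rw [hHY, hBB]
    exact HY_mul_G _ _ (hrootC t) HX (E t.1) (hHXE t.1) (c t)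
  have hHYG0 : HY * G0 = 0 := by
    rw [hHY, hBB]
    exact HY_mul_G0 hm HX
  have hGpair : ∀ s : ι, G (s, true) + G (s, false) = KAux m ⊗ₖ E s := by
    intro s
    have hp : ((lam (s, true) : ℝ):ℂ) * ((lam (s, false) : ℝ):ℂ) = -(m:ℂ) := by
      exact_mod_cast lam_prod m (θ s)
    exact MK_sum' hm _ _ hp (hdenC (s, true)) (hdenC (s, false)) (E s)
  have hsumG : (∑ t, G t) + G0 = 1 := by
    have h1 : ∑ t : ι × Bool, G t = ∑ s : ι, (KAux m ⊗ₖ E s) := by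
      rw [Fintype.sum_prod_type]
      refine Finset.sum_congr rfl fun s _ => ?_
      rw [Fintype.sum_bool]
      exact hGpair s
    have h2 : ∑ s : ι, (KAux m ⊗ₖ E s) = KAux m ⊗ₖ (1 : Matrix (Fin n) (Fin n) ℂ) := by
      rw [← hone]
      ext ⟨i, cc⟩ ⟨j, d⟩
      simp [Matrix.sum_apply, Matrix.kroneckerMap_apply, Finset.mul_sum]
    rw [h1, h2, hG0def, ← Matrix.add_kronecker, K_add_D, Matrix.one_kronecker_one]
  have hFHY : ∀ r, F r * HY = ((μ r : ℝ):ℂ) • F r := by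
    intro r
    rw [hdec', Finset.mul_sum,
      Finset.sum_eq_single_of_mem r (Finset.mem_univ r)
        (fun s _ hsr => by rw [mul_smul_comm, horth' r s (Ne.symm hsr), smul_zero]),
      mul_smul_comm, hidem' r]
  have hFG : ∀ r t, μ r ≠ lam t → F r * G t = 0 := by
    intro r t hne
    have h1 : F r * HY * G t = ((μ r : ℝ):ℂ) • (F r * G t) := by
      rw [hFHY, smul_mul_assoc]
    have h2 : F r * HY * G t = ((lam t : ℝ):ℂ) • (F r * G t) := by
      rw [mul_assoc, hHYG t, mul_smul_comm]
    have h3 : (((μ r : ℝ):ℂ) - ((lam t : ℝ):ℂ)) • (F r * G t) = 0 := by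
      rw [sub_smul, ← h1, ← h2, sub_self]
    have h4 : ((μ r : ℝ):ℂ) - ((lam t : ℝ):ℂ) ≠ 0 := by
      intro hc
      apply hne
      have : ((μ r : ℝ):ℂ) = ((lam t : ℝ):ℂ) := sub_eq_zero.mp hc
      exact_mod_cast this
    exact (smul_eq_zero.mp h3).resolve_left h4
  have hFG0 : ∀ r, μ r ≠ 0 → F r * G0 = 0 := by
    intro r hne
    have h1 : F r * HY * G0 = ((μ r : ℝ):ℂ) • (F r * G0) := by
      rw [hFHY, smul_mul_assoc]
    have h2 : F r * HY * G0 = 0 := by rw [mul_assoc, hHYG0, mul_zero]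
    rw [h2] at h1
    have h4 : ((μ r : ℝ):ℂ) ≠ 0 := by
      intro hc; apply hne; exact_mod_cast hc
    exact ((smul_eq_zero.mp h1.symm).resolve_left h4)
  have hFres : ∀ r, F r = (∑ t, F r * G t) + F r * G0 := by
    intro r
    rw [← Finset.mul_sum, ← mul_add, hsumG, mul_one]
  have hFeqG : ∀ r t, μ r = lam t → F r = G t := by
    intro r t hrt
    have h1 := hFres r
    rw [Finset.sum_eq_single_of_mem t (Finset.mem_univ t)
        (fun t' _ hne => hFG r t' (by rw [hrt]; exact fun hc => hne (hlinj hc.symm))),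
      hFG0 r (by rw [hrt]; exact hlne t), add_zero] at h1
    have h2 : G t = F r * G t := by
      conv_lhs => rw [← one_mul (G t), ← hone', Finset.sum_mul]
      rw [Finset.sum_eq_single_of_mem r (Finset.mem_univ r)
        (fun r' _ hne => hFG r' t (fun hc => hne (hμinj (hc.trans hrt.symm))))]
    exact h1.trans h2.symm
  have hcolx : ∀ (t : ι × Bool) (x : Fin n),
      G t *ᵥ (Pi.single ((0 : Fin (m+1)), x) 1 : Fin (m+1) × Fin n → ℂ)
      = fun p : Fin (m+1) × Fin n =>
          (c t * (vAux m ((lam t : ℝ):ℂ) p.1 * ((lam t : ℝ):ℂ)))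
            * ((E t.1 *ᵥ (Pi.single x 1 : Fin n → ℂ)) p.2) :=
    fun t x => G_col ((lam t : ℝ):ℂ) (c t) (E t.1) x
  have hcol0 : ∀ x : Fin n,
      G0 *ᵥ (Pi.single ((0 : Fin (m+1)), x) 1 : Fin (m+1) × Fin n → ℂ) = 0 :=
    fun x => G0_col x
  have hFcol0 : ∀ r, (¬ ∃ t, μ r = lam t) → ∀ x : Fin n,
      F r *ᵥ (Pi.single ((0 : Fin (m+1)), x) 1 : Fin (m+1) × Fin n → ℂ) = 0 := by
    intro r hex x
    push_neg at hex
    by_cases h0 : μ r = 0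
    · have h1 := hFres r
      rw [Finset.sum_eq_zero (fun t _ => hFG r t (hex t)), zero_add] at h1
      rw [h1, ← Matrix.mulVec_mulVec, hcol0, Matrix.mulVec_zero]
    · have h1 := hFres r
      rw [Finset.sum_eq_zero (fun t _ => hFG r t (hex t)), zero_add,
        hFG0 r h0] at h1
      rw [h1, Matrix.zero_mulVec]
  refine ⟨?_, ?_⟩
  · intro r
    by_cases hex : ∃ t, μ r = lam t
    · obtain ⟨t, ht⟩ := hex
      obtain ⟨q, hq⟩ := hsc t.1
      refine ⟨q, ?_⟩
      rw [hFeqG r t ht, hcolx t a, hcolx t b]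
      funext p
      have h5 := congrFun hq p.2
      simp only [Pi.smul_apply, smul_eq_mul] at h5 ⊢
      rw [h5]; ring
    · exact ⟨0, by rw [hFcol0 r hex a, hFcol0 r hex b, smul_zero]⟩
  · ext lam0
    simp only [Set.mem_setOf_eq]
    constructor
    · rintro ⟨r, hμr, hne⟩
      by_cases hex : ∃ t, μ r = lam t
      · obtain ⟨t, ht⟩ := hex
        refine ⟨t.1, ?_, ?_⟩
        · intro hE0
          apply hne
          rw [hFeqG r t ht, hcolx t a, hE0]
          funext p; simp
        · obtain ⟨s, e⟩ := t
          cases e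
          · right
            rw [← hμr, ht]
            exact lamAux_false m (θ s)
          · left
            rw [← hμr, ht]
            exact lamAux_true m (θ s)
      · exact absurd (hFcol0 r hex a) hne
    · rintro ⟨s, hEne, hcase⟩
      obtain ⟨e, hlam0⟩ : ∃ e : Bool, lam0 = lam (s, e) := by
        rcases hcase with h | h
        · exact ⟨true, h.trans (lamAux_true m (θ s)).symm⟩
        · exact ⟨false, h.trans (lamAux_false m (θ s)).symm⟩
      obtain ⟨cc, hcc⟩ : ∃ cc, (E s *ᵥ (Pi.single a 1 : Fin n → ℂ)) cc ≠ 0 := by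
        by_contra h; push_neg at h; exact hEne (funext h)
      have hcne : c (s, e) ≠ 0 := inv_ne_zero (hdenC (s, e))
      have hlC : ((lam (s, e) : ℝ):ℂ) ≠ 0 := by
        simpa using (hlne (s, e))
      have hGcol : G (s, e) *ᵥ (Pi.single ((0 : Fin (m+1)), a) 1 : Fin (m+1) × Fin n → ℂ) ≠ 0 := by
        rw [hcolx (s, e) a]
        intro h0
        have h6 := congrFun h0 ((0 : Fin (m+1)), cc)
        simp only [Pi.zero_apply] at h6
        have hv0 : vAux m ((lam (s, e) : ℝ):ℂ) (0 : Fin (m+1)) = ((lam (s, e) : ℝ):ℂ) := by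
          simp [vAux]
        rw [hv0] at h6
        rcases mul_eq_zero.mp h6 with h7 | h7
        · rcases mul_eq_zero.mp h7 with h8 | h8
          · exact hcne h8
          · exact hlC (mul_self_eq_zero.mp h8)
        · exact hcc h7
      have hexr : ∃ r, μ r = lam (s, e) := by
        by_contra hno
        push_neg at hno
        have hzero : G (s, e) = 0 := by
          conv_lhs => rw [← one_mul (G (s, e)), ← hone', Finset.sum_mul]
          exact Finset.sum_eq_zero fun r _ => hFG r (s, e) (hno r)
        exact hGcol (by rw [hzero, Matrix.zero_mulVec])
      obtain ⟨r, hr⟩ := hexr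
      refine ⟨r, by rw [hr, hlam0], ?_⟩
      rw [hFeqG r (s, e) hr]
      exact hGcol
end

section
/- Let m be a positive integer with gcd(3, m) = 1. Then the set {√3, √m, √(3+4m)} is linearly independent over ℚ. Consequently, if integers l_1,...,l_6 satisfy (l_1 − l_2)√m + ((l_3+l_4−l_5−l_6)/2)√3 + ((l_3−l_4+l_5−l_6)/2)√(3+4m) = 0, then l_3 + l_4 − l_5 − l_6 = 0. -/
/-!
Squaring `p √a + q √b + r √c = 0` leaves `2pq √(ab)` as the only irrational term, so `pq = 0`,
and a relation between two square roots `√x, √y` is trivial once `xy` is not a square. For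
`(a, b, c) = (3, m, 3 + 4m)`: `3 ∤ m` and `3 ∤ 3 + 4m` rule out `3m` and `3(3 + 4m)` being squares,
while `m` and `3 + 4m` are coprime and `3 + 4m ≡ 3 (mod 4)` is not a square, so neither is
`m(3 + 4m)`.
-/

open Real

namespace Nat

theorem not_isSquare_of_mod_four_eq_three {n : ℕ} (hn : n % 4 = 3) : ¬IsSquare n := by
  rintro ⟨k, rfl⟩
  have hk : k % 4 < 4 := Nat.mod_lt _ (by norm_num)
  have := Nat.mul_mod k k 4
  interval_cases k % 4 <;> omega

theorem Prime.not_isSquare_mul {p n : ℕ} (hp : p.Prime) (hn : ¬p ∣ n) : ¬IsSquare (p * n) := by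
  rintro ⟨k, hk⟩
  obtain ⟨j, rfl⟩ : p ∣ k := (hp.dvd_mul.mp ⟨n, hk.symm⟩).elim id id
  refine hn ⟨j * j, Nat.eq_of_mul_eq_mul_left hp.pos ?_⟩
  rw [hk]; ring

theorem Coprime.isSquare_of_isSquare_mul {a b : ℕ} (hab : a.Coprime b) (h : IsSquare (a * b)) :
    IsSquare a := by
  obtain ⟨k, hk⟩ := h
  obtain ⟨d, rfl⟩ := exists_eq_pow_of_mul_eq_pow (Nat.isUnit_iff.mpr hab) (hk.trans (sq k).symm)
  exact ⟨d, sq d⟩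

end Nat

theorem irrational_sqrt_mul_sqrt {a b : ℕ} (hab : ¬IsSquare (a * b)) :
    Irrational (√a * √b) := by
  rw [← sqrt_mul (Nat.cast_nonneg a), ← Nat.cast_mul]
  exact irrational_sqrt_natCast_iff.mpr hab

theorem eq_zero_of_mul_sqrt_add_mul_sqrt_eq_zero {a b : ℕ} (hab : ¬IsSquare (a * b))
    {q r : ℚ} (h : q * √a + r * √b = 0) : q = 0 ∧ r = 0 := by
  have hq : q = 0 := by
    by_contra hq
    refine ((irrational_sqrt_mul_sqrt hab).ratCast_mul hq).ne_rat (-r * b) ?_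
    have hbb : √b * √b = b := mul_self_sqrt (Nat.cast_nonneg b)
    push_cast
    linear_combination √b * h - r * hbb
  subst hq
  have hb : b ≠ 0 := by rintro rfl; exact hab ⟨0, by simp⟩
  have hsb : √(b : ℝ) ≠ 0 := sqrt_ne_zero'.mpr (by positivity)
  refine ⟨rfl, ?_⟩
  simpa [hsb] using h

theorem linearIndependent_sqrt_three {a b c : ℕ} (hab : ¬IsSquare (a * b))
    (hac : ¬IsSquare (a * c)) (hbc : ¬IsSquare (b * c)) :
    LinearIndependent ℚ ![√a, √b, √c] := by
  rw [Fintype.linearIndependent_iff]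
  intro g hg
  simp only [Fin.sum_univ_three, Matrix.cons_val_zero, Matrix.cons_val_one,
    Matrix.cons_val_two, Matrix.tail_cons, Matrix.head_cons, Rat.smul_def] at hg
  set p := g 0
  set q := g 1
  set r := g 2
  have hpq : p * q = 0 := by
    by_contra hpq
    refine ((irrational_sqrt_mul_sqrt hab).ratCast_mul (mul_ne_zero two_ne_zero hpq)).ne_rat
      (r ^ 2 * c - p ^ 2 * a - q ^ 2 * b) ?_
    have ha := mul_self_sqrt (Nat.cast_nonneg (α := ℝ) a)
    have hb := mul_self_sqrt (Nat.cast_nonneg (α := ℝ) b)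
    have hc := mul_self_sqrt (Nat.cast_nonneg (α := ℝ) c)
    push_cast
    linear_combination (p * √a + q * √b - r * √c) * hg - p ^ 2 * ha - q ^ 2 * hb + r ^ 2 * hc
  have hzero : p = 0 ∧ q = 0 ∧ r = 0 := by
    rcases mul_eq_zero.mp hpq with hp | hq
    · rw [hp, Rat.cast_zero, zero_mul, zero_add] at hg
      exact ⟨hp, eq_zero_of_mul_sqrt_add_mul_sqrt_eq_zero hbc hg⟩
    · rw [hq, Rat.cast_zero, zero_mul, add_zero] at hg
      obtain ⟨hp, hr⟩ := eq_zero_of_mul_sqrt_add_mul_sqrt_eq_zero hac hg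
      exact ⟨hp, hq, hr⟩
  intro i
  fin_cases i
  exacts [hzero.1, hzero.2.1, hzero.2.2]

theorem stmt17_general (m : ℕ) (hgcd : Nat.gcd 3 m = 1) :
    LinearIndependent ℚ
      ![Real.sqrt 3, Real.sqrt m, Real.sqrt (3 + 4 * m)]
    ∧ ∀ l1 l2 l3 l4 l5 l6 : ℤ,
        ((l1 : ℝ) - l2) * Real.sqrt m
          + (((l3 : ℝ) + l4 - l5 - l6) / 2) * Real.sqrt 3
          + (((l3 : ℝ) - l4 + l5 - l6) / 2) * Real.sqrt (3 + 4 * m) = 0 →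
        l3 + l4 - l5 - l6 = 0 := by
  have h3m : ¬3 ∣ m := fun h => by simp [Nat.gcd_eq_left h] at hgcd
  have hind : LinearIndependent ℚ ![Real.sqrt 3, Real.sqrt m, Real.sqrt (3 + 4 * m)] := by
    have := linearIndependent_sqrt_three (a := 3) (b := m) (c := 3 + 4 * m)
      (Nat.prime_three.not_isSquare_mul h3m) (Nat.prime_three.not_isSquare_mul (by omega))
      fun h => Nat.not_isSquare_of_mod_four_eq_three (by omega)
        (((Nat.coprime_add_mul_right_left 3 m 4).mpr hgcd).isSquare_of_isSquare_mul
          (by rwa [mul_comm] at h))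
    simpa using this
  refine ⟨hind, fun l1 l2 l3 l4 l5 l6 h => ?_⟩
  have := Fintype.linearIndependent_iff.mp hind
    ![((l3 + l4 - l5 - l6 : ℤ) : ℚ) / 2, (l1 - l2 : ℤ), ((l3 - l4 + l5 - l6 : ℤ) : ℚ) / 2]
    (by simp [Fin.sum_univ_three, Rat.smul_def]; linear_combination h) 0
  simp only [Matrix.cons_val_zero, div_eq_zero_iff, two_ne_zero, or_false] at this
  exact_mod_cast this

/-- For a positive integer `m` with `gcd(3, m) = 1`, the reals
`√3, √m, √(3+4m)` are linearly independent over `ℚ`; consequently, if integers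
`l₁, …, l₆` satisfy
`(l₁−l₂)√m + ((l₃+l₄−l₅−l₆)/2)√3 + ((l₃−l₄+l₅−l₆)/2)√(3+4m) = 0`,
then `l₃ + l₄ − l₅ − l₆ = 0`. -/
theorem stmt17 (m : ℕ) (hm : 0 < m) (hgcd : Nat.gcd 3 m = 1) :
    LinearIndependent ℚ
      ![Real.sqrt 3, Real.sqrt m, Real.sqrt (3 + 4 * m)]
    ∧ ∀ l1 l2 l3 l4 l5 l6 : ℤ,
        ((l1 : ℝ) - l2) * Real.sqrt m
          + (((l3 : ℝ) + l4 - l5 - l6) / 2) * Real.sqrt 3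
          + (((l3 : ℝ) - l4 + l5 - l6) / 2) * Real.sqrt (3 + 4 * m) = 0 →
        l3 + l4 - l5 - l6 = 0 :=
  stmt17_general m hgcd
end

section
/- Let θ_0, ..., θ_{n−1} be rational numbers and γ a transcendental real number. For each j let φ_j(t) = (t − γ)g_{m-1}^{(j)}(t) − g_{m-2}^{(j)}(t), where g_{m-1}^{(j)} and g_{m-2}^{(j)} are the characteristic polynomials of the (m−1)×(m−1) Jacobi matrix with diagonal (θ_j, 0, ..., 0) and sub/super-diagonal 1, and of its leading (m−2)×(m−2) principal submatrix. If g_{m-1}^{(j)} and g_{m-2}^{(j)} have no common root, then φ_j(t), viewed as a polynomial over ℚ(γ), is irreducible over ℚ(γ). -/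
open Polynomial IntermediateField

noncomputable section Stmt18Aux

set_option synthInstance.maxHeartbeats 1000000
set_option maxHeartbeats 1000000

namespace Stmt18Aux

/-- Coefficient embedding `ℚ[X] → ℚ[X][Y]` sending the variable to the OUTER variable. -/
noncomputable def gSwap : Polynomial ℚ →+* Polynomial (Polynomial ℚ) :=
  eval₂RingHom ((C : Polynomial ℚ →+* Polynomial (Polynomial ℚ)).comp (C : ℚ →+* Polynomial ℚ)) X

/-- The variable-swap endomorphism of `ℚ[X][Y]`. -/
noncomputable def tauSwap : Polynomial (Polynomial ℚ) →+* Polynomial (Polynomial ℚ) :=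
  eval₂RingHom gSwap (C X)

lemma gSwap_C (q : ℚ) : gSwap (C q) = C (C q) := by simp [gSwap]
lemma gSwap_X : gSwap X = X := by simp [gSwap]
lemma tauSwap_C (a : Polynomial ℚ) : tauSwap (C a) = gSwap a := by simp [tauSwap]
lemma tauSwap_X : tauSwap X = C X := by simp [tauSwap]

lemma gSwap_eq_mapRingHom : gSwap = mapRingHom (C : ℚ →+* Polynomial ℚ) := by
  apply Polynomial.ringHom_ext'
  · ext q; simp [gSwap]
  · simp [gSwap]

lemma gSwap_poly (p : Polynomial ℚ) : gSwap p = p.map (C : ℚ →+* Polynomial ℚ) := by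
  rw [gSwap_eq_mapRingHom]; rfl

lemma tauSwap_tauSwap : tauSwap.comp tauSwap = RingHom.id (Polynomial (Polynomial ℚ)) := by
  apply Polynomial.ringHom_ext'
  · apply Polynomial.ringHom_ext'
    · ext q
      simp [tauSwap_C, gSwap_C]
    · simp [tauSwap_C, gSwap_X, tauSwap_X]
  · simp [tauSwap_X, tauSwap_C, gSwap_X]

/-- The variable-swap automorphism of `ℚ[X][Y]`. -/
noncomputable def sigmaSwap : Polynomial (Polynomial ℚ) ≃+* Polynomial (Polynomial ℚ) :=
  RingEquiv.ofRingHom tauSwap tauSwap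
    (DFunLike.ext _ _ fun x => RingHom.congr_fun tauSwap_tauSwap x)
    (DFunLike.ext _ _ fun x => RingHom.congr_fun tauSwap_tauSwap x)

/-- The polynomial `(X·g₁ - g₂) - g₁·Y`, linear in `Y` with coprime coefficients,
is irreducible in `ℚ[X][Y]`. -/
lemma P_irred (g1 g2 : Polynomial ℚ) (h1 : g1 ≠ 0) (hcop : IsCoprime g1 g2) :
    Irreducible (C (X * g1 - g2) - C g1 * X : Polynomial (Polynomial ℚ)) := by
  set P : Polynomial (Polynomial ℚ) := C (X * g1 - g2) - C g1 * X with hP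
  have hprim : P.IsPrimitive := by
    intro r hr
    rw [Polynomial.C_dvd_iff_dvd_coeff] at hr
    have h0 := hr 0
    have h1' := hr 1
    simp [hP, coeff_C] at h0 h1'
    have hrg2 : r ∣ g2 := by
      have hgg : g2 = X * g1 - (X * g1 - g2) := by ring
      rw [hgg]
      exact dvd_sub (Dvd.dvd.mul_left h1' X) h0
    exact hcop.isUnit_of_dvd' h1' hrg2
  refine (hprim.irreducible_iff_irreducible_map_fraction_map (K := RatFunc ℚ)).mpr ?_
  apply Polynomial.irreducible_of_degree_eq_one
  have hmap : P.map (algebraMap (Polynomial ℚ) (RatFunc ℚ)) =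
      C (algebraMap (Polynomial ℚ) (RatFunc ℚ) (X * g1 - g2))
        - C (algebraMap (Polynomial ℚ) (RatFunc ℚ) g1) * X := by
    simp [hP]
  rw [hmap]
  have hc : algebraMap (Polynomial ℚ) (RatFunc ℚ) g1 ≠ 0 := by
    intro h
    exact h1 (IsFractionRing.injective (Polynomial ℚ) (RatFunc ℚ) (by simpa using h))
  have hdX : (C (algebraMap (Polynomial ℚ) (RatFunc ℚ) g1) * X :
      Polynomial (RatFunc ℚ)).degree = 1 := by
    rw [degree_C_mul_X hc]
  rw [degree_sub_eq_right_of_degree_lt]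
  · exact hdX
  · rw [hdX]
    exact lt_of_le_of_lt (degree_C_le) (by norm_num)

/-- Two polynomials over `ℚ` with no common complex root are coprime. -/
lemma coprime_of_no_common_root (p q : Polynomial ℚ) (hp : p ≠ 0)
    (h : ¬ ∃ z : ℂ, aeval z p = 0 ∧ aeval z q = 0) : IsCoprime p q := by
  rw [← Polynomial.isCoprime_map (algebraMap ℚ ℂ)]
  by_contra hc
  classical
  set p' := p.map (algebraMap ℚ ℂ)
  set q' := q.map (algebraMap ℚ ℂ)
  have hdu : ¬ IsUnit (EuclideanDomain.gcd p' q') := fun hu =>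
    hc (EuclideanDomain.gcd_isUnit_iff.mp hu)
  have hp' : p' ≠ 0 := by
    simpa [p', Polynomial.map_eq_zero] using hp
  have hd0 : EuclideanDomain.gcd p' q' ≠ 0 := fun h0 =>
    hp' ((EuclideanDomain.gcd_eq_zero_iff.mp h0).1)
  have hdeg : (EuclideanDomain.gcd p' q').degree ≠ 0 := by
    intro h0
    exact hdu (Polynomial.isUnit_iff_degree_eq_zero.mpr h0)
  obtain ⟨z, hz⟩ := Complex.isAlgClosed.exists_root _ hdeg
  refine h ⟨z, ?_, ?_⟩
  · have hdvd : EuclideanDomain.gcd p' q' ∣ p' := EuclideanDomain.gcd_dvd_left _ _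
    have hroot : IsRoot p' z := hz.dvd hdvd
    rwa [Polynomial.aeval_def, ← Polynomial.eval_map]
  · have hdvd : EuclideanDomain.gcd p' q' ∣ q' := EuclideanDomain.gcd_dvd_right _ _
    have hroot : IsRoot q' z := hz.dvd hdvd
    rwa [Polynomial.aeval_def, ← Polynomial.eval_map]

/-- The canonical identification of `ℚ(X)` with `ℚ(γ)` for transcendental `γ`. -/
noncomputable def fieldE (γ : ℝ) (hγ : Transcendental ℚ γ) : RatFunc ℚ ≃+* ℚ⟮γ⟯ :=
  (((IsFractionRing.ringEquivOfRingEquiv (K := RatFunc ℚ)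
      (L := FractionRing (MvPolynomial Unit ℚ))
      (MvPolynomial.pUnitAlgEquiv ℚ).symm.toRingEquiv).trans
    ((algebraicIndependent_unique_type_iff.mpr hγ : AlgebraicIndependent ℚ
      (fun _ : Unit => γ)).aevalEquivField : FractionRing (MvPolynomial Unit ℚ) ≃+*
      ↥(adjoin ℚ (Set.range fun _ : Unit => γ)))).trans
    ((IntermediateField.equivOfEq (by rw [Set.range_const] :
      IntermediateField.adjoin ℚ (Set.range fun _ : Unit => γ) = ℚ⟮γ⟯)) :
      ↥(adjoin ℚ (Set.range fun _ : Unit => γ)) ≃+* ℚ⟮γ⟯))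

lemma fieldE_algebraMap (γ : ℝ) (hγ : Transcendental ℚ γ) (p : Polynomial ℚ) :
    (fieldE γ hγ (algebraMap (Polynomial ℚ) (RatFunc ℚ) p) : ℝ) =
      Polynomial.aeval γ p := by
  rw [fieldE, RingEquiv.trans_apply, RingEquiv.trans_apply,
    IsFractionRing.ringEquivOfRingEquiv_algebraMap]
  have h1 : ∀ x : ↥(adjoin ℚ (Set.range fun _ : Unit => γ)),
      (((IntermediateField.equivOfEq (by rw [Set.range_const] :
      IntermediateField.adjoin ℚ (Set.range fun _ : Unit => γ) = ℚ⟮γ⟯)) :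
      ↥(adjoin ℚ (Set.range fun _ : Unit => γ)) ≃+* ℚ⟮γ⟯) x : ℝ) = (x : ℝ) :=
    fun x => by simp [IntermediateField.equivOfEq_apply]
  rw [h1]
  have hx : AlgebraicIndependent ℚ (fun _ : Unit => γ) :=
    algebraicIndependent_unique_type_iff.mpr hγ
  have h2 : ∀ y, (((hx.aevalEquivField : FractionRing (MvPolynomial Unit ℚ) ≃+*
      ↥(adjoin ℚ (Set.range fun _ : Unit => γ))) y : ℝ)) = ((hx.aevalEquivField y : ℝ)) :=
    fun _ => rfl
  rw [h2, hx.aevalEquivField_algebraMap_apply_coe]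
  have h3 : ((MvPolynomial.aeval fun _ : Unit => γ).comp
      (MvPolynomial.pUnitAlgEquiv ℚ).symm.toAlgHom) = Polynomial.aeval γ :=
    Polynomial.algHom_ext (by simp [MvPolynomial.pUnitAlgEquiv])
  exact DFunLike.congr_fun h3 p

end Stmt18Aux

end Stmt18Aux

open Stmt18Aux in
/-- Let `γ` be a transcendental real number and `θ ∈ ℚ`. Let `g₁` be the
characteristic polynomial of the `(m−1) × (m−1)` Jacobi matrix with diagonal
`(θ, 0, …, 0)` and sub/super-diagonal entries `1`, and `g₂` that of its leading
`(m−2) × (m−2)` principal submatrix. If `g₁` and `g₂` have no common (complex)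
root, then `φ(t) = (t − γ) g₁(t) − g₂(t)` is irreducible over `ℚ(γ)`. -/
theorem stmt18 (γ : ℝ) (hγ : Transcendental ℚ γ) (θ : ℚ) (m : ℕ) (hm : 2 ≤ m)
    (J : Matrix (Fin (m - 1)) (Fin (m - 1)) ℚ)
    (hJ : J = Matrix.of fun i j =>
      if i.val = j.val then (if i.val = 0 then θ else 0)
      else if i.val + 1 = j.val ∨ j.val + 1 = i.val then 1 else 0)
    (g1 g2 : Polynomial ℚ)
    (hg1 : g1 = J.charpoly)
    (hg2 : g2 = (J.submatrix (Fin.castLE (by omega : m - 2 ≤ m - 1))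
      (Fin.castLE (by omega : m - 2 ≤ m - 1))).charpoly)
    (hcoprime : ¬ ∃ z : ℂ, Polynomial.aeval z g1 = 0 ∧ Polynomial.aeval z g2 = 0) :
    Irreducible
      ((X - C (IntermediateField.AdjoinSimple.gen ℚ γ))
          * (g1.map (algebraMap ℚ ℚ⟮γ⟯))
        - g2.map (algebraMap ℚ ℚ⟮γ⟯)) := by
  classical
  -- basic facts about g1 and g2
  have hg1m : g1.Monic := by rw [hg1]; exact Matrix.charpoly_monic J
  have hg1ne : g1 ≠ 0 := hg1m.ne_zero
  have hdeg1 : g1.natDegree = m - 1 := by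
    rw [hg1, Matrix.charpoly_natDegree_eq_dim, Fintype.card_fin]
  have hdeg2 : g2.natDegree = m - 2 := by
    rw [hg2, Matrix.charpoly_natDegree_eq_dim, Fintype.card_fin]
  have hcop : IsCoprime g1 g2 := coprime_of_no_common_root g1 g2 hg1ne hcoprime
  -- the swapped polynomial Ψ ∈ ℚ[γ][t]
  set Ψ : Polynomial (Polynomial ℚ) :=
    (X - C X) * g1.map (C : ℚ →+* Polynomial ℚ) - g2.map (C : ℚ →+* Polynomial ℚ) with hΨ
  -- Ψ is the image of the irreducible linear (in γ) polynomial under the swap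
  have hswap : sigmaSwap (C (X * g1 - g2) - C g1 * X) = Ψ := by
    show tauSwap (C (X * g1 - g2) - C g1 * X) = Ψ
    simp only [map_sub, map_mul, tauSwap_C, tauSwap_X, gSwap_X, gSwap_poly, hΨ,
      Polynomial.map_X]
    ring
  have hΨirr : Irreducible Ψ := by
    rw [← hswap]
    exact (MulEquiv.irreducible_iff sigmaSwap).mpr (P_irred g1 g2 hg1ne hcop)
  -- Ψ is monic of degree m
  have hmonmul : ((X - C X) * g1.map (C : ℚ →+* Polynomial ℚ)).Monic :=
    (monic_X_sub_C _).mul (hg1m.map _)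
  have hndmul : ((X - C X) * g1.map (C : ℚ →+* Polynomial ℚ)).natDegree = m := by
    rw [(monic_X_sub_C (X : Polynomial ℚ)).natDegree_mul (hg1m.map _), natDegree_X_sub_C,
      hg1m.natDegree_map, hdeg1]
    omega
  have hΨm : Ψ.Monic := by
    rw [hΨ]
    refine hmonmul.sub_of_left ?_
    rw [degree_eq_natDegree hmonmul.ne_zero, hndmul]
    calc (g2.map (C : ℚ →+* Polynomial ℚ)).degree ≤ g2.degree := degree_map_le
      _ ≤ (g2.natDegree : WithBot ℕ) := degree_le_natDegree
      _ < (m : WithBot ℕ) := by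
          rw [hdeg2]
          exact_mod_cast (by omega : m - 2 < m)
  -- Gauss: Ψ irreducible over ℚ[γ] implies irreducible over ℚ(γ) ≃ RatFunc ℚ
  have hΦirr : Irreducible (Ψ.map (algebraMap (Polynomial ℚ) (RatFunc ℚ))) :=
    (hΨm.irreducible_iff_irreducible_map_fraction_map (K := RatFunc ℚ)).mp hΨirr
  -- transport along the identification RatFunc ℚ ≃ ℚ(γ)
  have hfin := (MulEquiv.irreducible_iff
    (Polynomial.mapEquiv (fieldE γ hγ))).mpr hΦirr
  set f : Polynomial ℚ →+* ℚ⟮γ⟯ :=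
    ((fieldE γ hγ : RatFunc ℚ →+* ℚ⟮γ⟯)).comp (algebraMap (Polynomial ℚ) (RatFunc ℚ)) with hf
  have hfX : f X = IntermediateField.AdjoinSimple.gen ℚ γ := by
    apply Subtype.ext
    show ((fieldE γ hγ) (algebraMap (Polynomial ℚ) (RatFunc ℚ) X) : ℝ) = _
    rw [fieldE_algebraMap]
    simp [IntermediateField.AdjoinSimple.coe_gen]
  have hfC : f.comp (C : ℚ →+* Polynomial ℚ) = algebraMap ℚ ℚ⟮γ⟯ := Subsingleton.elim _ _
  have hkey : (Polynomial.mapEquiv (fieldE γ hγ)) (Ψ.map (algebraMap (Polynomial ℚ) (RatFunc ℚ)))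
      = (X - C (IntermediateField.AdjoinSimple.gen ℚ γ))
          * (g1.map (algebraMap ℚ ℚ⟮γ⟯)) - g2.map (algebraMap ℚ ℚ⟮γ⟯) := by
    rw [Polynomial.mapEquiv_apply, Polynomial.map_map]
    show Ψ.map f = _
    rw [hΨ]
    simp only [Polynomial.map_sub, Polynomial.map_mul, Polynomial.map_X, Polynomial.map_C,
      Polynomial.map_map, hfX, hfC]
  rwa [hkey] at hfin
end
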